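/- arXiv:math/0312026 — 6 statements merged into one kernel-verified Lean document; each statement's English description precedes it below -/
import Mathlib

section
/- Let x ∈ E(A) with type σ = σ(x;A) > 0, and fix an integer m ≥ 1. Then for every k ∈ {0,1,…,m−1}, the convergence radius of the Mittag-Leffler series F_k(z;A)x = Σ_{n≥0} z^{mn+k} A^n x/(mn+k)! does not depend on k and equals σ^{−1/m}·p^{−1/(p−1)}; equivalently, limsup_{n→∞} (‖A^n x‖ / |(mn+k)!|_p)^{1/(mn+k)} = σ^{1/m}·p^{1/(p−1)}. -/
/-!
Legendre's formula `(p - 1) v_p(N!) = N - s_p(N)`, with digit sum `s_p(N) = O(log N)`, gives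
`v_p(N!) / N → 1 / (p - 1)`; as the norm of `K` extends that of `ℚ_p`, this means
`‖N!‖^(-1/N) → p^(1/(p-1))`. On the other side,
`‖Aⁿx‖^(1/(mn+k)) = (‖Aⁿx‖^(1/n))^(n/(mn+k))` with `n/(mn+k) → 1/m`, and raising to exponents
converging to `1/m` turns the limsup `σ` into `σ^(1/m)`. The limsup of a product with a
convergent positive factor is the product of the limits.
-/

open Filter Topology

section LimsupReal

variable {ι : Type*} {l : Filter ι}

theorem limsup_mul_of_tendsto [l.NeBot] {u v : ι → ℝ} {c : ℝ} (hu : 0 ≤ᶠ[l] u)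
    (hbdd : IsBoundedUnder (· ≤ ·) l u) (hv : 0 ≤ᶠ[l] v) (hlim : Tendsto v l (𝓝 c)) :
    limsup (u * v) l = limsup u l * c := by
  have hfreq : ∃ᶠ i in l, 0 ≤ u i := hu.frequently
  refine le_antisymm ?_ ?_
  · simpa only [hlim.limsup_eq] using limsup_mul_le hfreq hbdd hv hlim.isBoundedUnder_le
  · simpa only [hlim.liminf_eq] using le_limsup_mul hfreq hbdd hv hlim.isBoundedUnder_le

theorem isBoundedUnder_rpow_of_tendsto {u e : ι → ℝ} {e₀ : ℝ} (hu : 0 ≤ᶠ[l] u)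
    (hbdd : IsBoundedUnder (· ≤ ·) l u) (he_nonneg : 0 ≤ᶠ[l] e) (he : Tendsto e l (𝓝 e₀)) :
    IsBoundedUnder (· ≤ ·) l fun i => u i ^ e i := by
  obtain ⟨M, hM⟩ := hbdd.eventually_le
  have hconst : Tendsto (fun i => max M 1 ^ e i) l (𝓝 (max M 1 ^ e₀)) :=
    (Real.continuousAt_const_rpow (by positivity)).tendsto.comp he
  refine hconst.isBoundedUnder_le.mono_le ?_
  filter_upwards [hM, hu, he_nonneg] with i hMi hui hei
  exact Real.rpow_le_rpow hui (hMi.trans (le_max_left M 1)) hei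

theorem limsup_rpow_of_tendsto [l.NeBot] {u e : ι → ℝ} {e₀ : ℝ} (hu : 0 ≤ᶠ[l] u)
    (hbdd : IsBoundedUnder (· ≤ ·) l u) (hpos : 0 < limsup u l)
    (he : Tendsto e l (𝓝 e₀)) (he₀ : 0 < e₀) :
    limsup (fun i => u i ^ e i) l = limsup u l ^ e₀ := by
  set σ := limsup u l
  have he_nonneg : ∀ᶠ i in l, 0 ≤ e i := he.eventually_const_le he₀
  have hconst (s : ℝ) (hs : 0 < s) : Tendsto (fun i => s ^ e i) l (𝓝 (s ^ e₀)) :=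
    (Real.continuousAt_const_rpow hs.ne').tendsto.comp he
  have above (s : ℝ) (hs : σ < s) : (fun i => u i ^ e i) ≤ᶠ[l] fun i => s ^ e i := by
    filter_upwards [eventually_lt_of_limsup_lt hs hbdd, hu, he_nonneg] with i hi hui hei
    exact Real.rpow_le_rpow hui hi.le hei
  have hcob : IsCoboundedUnder (· ≤ ·) l fun i => u i ^ e i :=
    isCoboundedUnder_le_of_eventually_le l (x := 0) (hu.mono fun i hi => Real.rpow_nonneg hi _)
  have hcont : Tendsto (fun s : ℝ => s ^ e₀) (𝓝 σ) (𝓝 (σ ^ e₀)) :=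
    (Real.continuous_rpow_const he₀.le).tendsto σ
  refine le_antisymm ?_ ?_
  · refine ge_of_tendsto (hcont.mono_left (nhdsWithin_le_nhds (s := Set.Ioi σ)))
      (eventually_nhdsWithin_of_forall fun s (hs : σ < s) => ?_)
    rw [← (hconst s (hpos.trans hs)).limsup_eq]
    exact limsup_le_limsup (above s hs) hcob (hconst s (hpos.trans hs)).isBoundedUnder_le
  · refine le_of_tendsto (hcont.mono_left nhdsWithin_le_nhds)
      (eventually_of_mem (Ioo_mem_nhdsLT hpos) fun s ⟨hs₀, hs⟩ => ?_)
    have hcobu : IsCoboundedUnder (· ≤ ·) l u :=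
      isCoboundedUnder_le_of_eventually_le l hu
    have below : ∃ᶠ i in l, s ^ e i ≤ u i ^ e i :=
      ((frequently_lt_of_lt_limsup hcobu hs).and_eventually he_nonneg).mono
        fun i ⟨hi, hei⟩ => Real.rpow_le_rpow hs₀.le hi.le hei
    rw [← (hconst s hs₀).liminf_eq]
    exact liminf_le_limsup_of_frequently_le below (hconst s hs₀).isBoundedUnder_ge
      (isBoundedUnder_rpow_of_tendsto hu hbdd he_nonneg he)

end LimsupReal

theorem Nat.digits_sum_le_mul_log_add_one (b N : ℕ) (hb : 1 < b) :
    (b.digits N).sum ≤ (b - 1) * (Nat.log b N + 1) := by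
  rcases eq_or_ne N 0 with rfl | hN
  · simp
  calc (b.digits N).sum ≤ (b.digits N).length • (b - 1) :=
        List.sum_le_card_nsmul _ _ fun d hd => Nat.le_sub_one_of_lt (Nat.digits_lt_base hb hd)
    _ = (b - 1) * (Nat.log b N + 1) := by
        rw [Nat.length_digits b N hb hN, smul_eq_mul, mul_comm]

theorem tendsto_digits_sum_div_atTop {b : ℕ} (hb : 1 < b) :
    Tendsto (fun N : ℕ => ((b.digits N).sum : ℝ) / N) atTop (𝓝 0) := by
  have hlogb : Tendsto (fun N : ℕ => Real.logb b N / N) atTop (𝓝 0) := by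
    have := (Real.tendsto_pow_log_div_mul_add_atTop (Real.log b) 0 1
      (Real.log_pos (by exact_mod_cast hb)).ne').comp tendsto_natCast_atTop_atTop
    refine this.congr fun N => ?_
    simp [Real.logb, div_div, mul_comm]
  have hbound : Tendsto (fun N : ℕ => ((b : ℝ) - 1) * (Real.logb b N / N + 1 / N)) atTop (𝓝 0) := by
    simpa using (hlogb.add tendsto_one_div_atTop_nhds_zero_nat).const_mul ((b : ℝ) - 1)
  refine tendsto_of_tendsto_of_tendsto_of_le_of_le tendsto_const_nhds hbound
    (fun N => by positivity) fun N => ?_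
  have hsum : ((b.digits N).sum : ℝ) ≤ ((b : ℝ) - 1) * (Nat.log b N + 1) := by
    have := Nat.digits_sum_le_mul_log_add_one b N hb
    rw [← Nat.cast_le (α := ℝ)] at this
    push_cast [Nat.cast_sub hb.le] at this ⊢
    exact this
  have hb1 : (0 : ℝ) ≤ b - 1 := by
    have : (1 : ℝ) ≤ b := by exact_mod_cast hb.le
    linarith
  calc ((b.digits N).sum : ℝ) / N ≤ ((b : ℝ) - 1) * (Nat.log b N + 1) / N := by gcongr
    _ ≤ ((b : ℝ) - 1) * (Real.logb b N + 1) / N := by gcongr; exact Real.natLog_le_logb N b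
    _ = ((b : ℝ) - 1) * (Real.logb b N / N + 1 / N) := by ring

theorem tendsto_padicValNat_factorial_div_atTop (p : ℕ) [hp : Fact p.Prime] :
    Tendsto (fun N : ℕ => (padicValNat p N.factorial : ℝ) / N) atTop (𝓝 (1 / ((p : ℝ) - 1))) := by
  have hp1 : (0 : ℝ) < p - 1 := by
    have : (2 : ℝ) ≤ p := by exact_mod_cast hp.out.two_le
    linarith
  have hlim := ((tendsto_const_nhds (x := (1 : ℝ))).sub
    (tendsto_digits_sum_div_atTop hp.out.one_lt)).div_const ((p : ℝ) - 1)
  rw [sub_zero] at hlim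
  refine hlim.congr' ?_
  filter_upwards [eventually_ne_atTop 0] with N hN
  have legendre : ((p : ℝ) - 1) * padicValNat p N.factorial = N - (p.digits N).sum := by
    have := congrArg (Nat.cast (R := ℝ)) (sub_one_mul_padicValNat_factorial (p := p) N)
    push_cast [Nat.cast_sub hp.out.one_le, Nat.cast_sub (Nat.digit_sum_le p N)] at this ⊢
    exact this
  field_simp
  linarith

section IsometricPadic

variable {p : ℕ} [hp : Fact p.Prime] {K : Type*} [NormedRing K] [Algebra ℚ_[p] K]

theorem norm_natCast_eq_zpow_neg_padicValNat (hK : ∀ q : ℚ_[p], ‖algebraMap ℚ_[p] K q‖ = ‖q‖)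
    {n : ℕ} (hn : n ≠ 0) : ‖(n : K)‖ = (p : ℝ) ^ (-(padicValNat p n : ℤ)) := by
  rw [← map_natCast (algebraMap ℚ_[p] K), hK,
    Padic.norm_eq_zpow_neg_valuation (Nat.cast_ne_zero.2 hn), Padic.valuation_natCast]

theorem tendsto_inv_norm_factorial_rpow (hK : ∀ q : ℚ_[p], ‖algebraMap ℚ_[p] K q‖ = ‖q‖) :
    Tendsto (fun N : ℕ => (‖(N.factorial : K)‖ ^ (1 / (N : ℝ)))⁻¹) atTop
      (𝓝 ((p : ℝ) ^ (1 / ((p : ℝ) - 1)))) := by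
  have hp0 : (0 : ℝ) < p := by exact_mod_cast hp.out.pos
  refine ((Real.continuous_const_rpow hp0.ne').tendsto _).comp
    (tendsto_padicValNat_factorial_div_atTop p) |>.congr fun N => ?_
  rw [norm_natCast_eq_zpow_neg_padicValNat hK N.factorial_ne_zero, ← Real.rpow_intCast,
    ← Real.rpow_mul hp0.le, ← Real.rpow_neg hp0.le]
  simp only [Function.comp_apply, Int.cast_neg, Int.cast_natCast]
  ring_nf

end IsometricPadic

theorem isBoundedUnder_rpow_one_div_of_le_geometric {a : ℕ → ℝ} {c α : ℝ}
    (ha : ∀ n, 0 ≤ a n) (hc : 0 < c) (hα : 0 < α) (hbound : ∀ n, a n ≤ c * α ^ n) :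
    IsBoundedUnder (· ≤ ·) atTop fun n => a n ^ (1 / (n : ℝ)) := by
  refine isBoundedUnder_of_eventually_le (a := max c 1 * α) ?_
  filter_upwards [eventually_ne_atTop 0] with n hn
  have hroot : (c * α ^ n) ^ (1 / (n : ℝ)) = c ^ (1 / (n : ℝ)) * α := by
    rw [Real.mul_rpow hc.le (by positivity), one_div, Real.pow_rpow_inv_natCast hα.le hn]
  have hc_root : c ^ (1 / (n : ℝ)) ≤ max c 1 :=
    calc c ^ (1 / (n : ℝ)) ≤ max c 1 ^ (1 / (n : ℝ)) :=
          Real.rpow_le_rpow hc.le (le_max_left c 1) (by positivity)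
      _ ≤ max c 1 ^ (1 : ℝ) := Real.rpow_le_rpow_of_exponent_le (le_max_right c 1) <| by
          rw [div_le_one (by positivity)]; exact_mod_cast Nat.one_le_iff_ne_zero.2 hn
      _ = max c 1 := Real.rpow_one _
  calc a n ^ (1 / (n : ℝ)) ≤ (c * α ^ n) ^ (1 / (n : ℝ)) :=
        Real.rpow_le_rpow (ha n) (hbound n) (by positivity)
    _ ≤ max c 1 * α := by rw [hroot]; gcongr

theorem tendsto_natCast_div_mul_add_atTop {m : ℕ} (hm : m ≠ 0) (k : ℕ) :
    Tendsto (fun n : ℕ => (n : ℝ) / ((m * n + k : ℕ) : ℝ)) atTop (𝓝 (1 / (m : ℝ))) := by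
  have := (tendsto_natCast_div_add_atTop ((k : ℝ) / m)).const_mul (1 / (m : ℝ))
  rw [mul_one] at this
  refine this.congr' ?_
  filter_upwards [eventually_ne_atTop 0] with n hn
  push_cast
  field_simp

theorem mittag_leffler_radius_general
    {p : ℕ} [Fact p.Prime]
    {K : Type*} [NontriviallyNormedField K] [Algebra ℚ_[p] K]
    (hK : ∀ q : ℚ_[p], ‖algebraMap ℚ_[p] K q‖ = ‖q‖)
    {B : Type*} [NormedAddCommGroup B] [NormedSpace K B]
    (A : B →ₗ[K] B)
    (m : ℕ) (hm : 1 ≤ m) (k : ℕ)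
    (x : B)
    (hxE : ∃ α > (0 : ℝ), ∃ c > (0 : ℝ), ∀ n : ℕ, ‖(⇑A)^[n] x‖ ≤ c * α ^ n)
    (σ : ℝ)
    (hσdef : σ = Filter.limsup (fun n : ℕ => ‖(⇑A)^[n] x‖ ^ (1 / (n : ℝ))) atTop)
    (hσpos : 0 < σ) :
    Filter.limsup
        (fun n : ℕ =>
          (‖(⇑A)^[n] x‖ / ‖((m * n + k).factorial : K)‖) ^ (1 / ((m * n + k : ℕ) : ℝ)))
        atTop
      = σ ^ (1 / (m : ℝ)) * (p : ℝ) ^ (1 / ((p : ℝ) - 1)) := by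
  obtain ⟨α, hα, c, hc, hbound⟩ := hxE
  have hm₀ : m ≠ 0 := Nat.one_le_iff_ne_zero.1 hm
  set u : ℕ → ℝ := fun n => ‖(⇑A)^[n] x‖ ^ (1 / (n : ℝ))
  have hu : 0 ≤ᶠ[atTop] u := .of_forall fun n => by positivity
  have hu_bdd : IsBoundedUnder (· ≤ ·) atTop u :=
    isBoundedUnder_rpow_one_div_of_le_geometric (fun n => norm_nonneg _) hc hα hbound
  have he := tendsto_natCast_div_mul_add_atTop hm₀ k
  have hroot : limsup (fun n => u n ^ ((n : ℝ) / ((m * n + k : ℕ) : ℝ))) atTop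
      = σ ^ (1 / (m : ℝ)) := by
    rw [hσdef] at hσpos ⊢
    exact limsup_rpow_of_tendsto hu hu_bdd hσpos he (by positivity)
  have hN : Tendsto (fun n => m * n + k) atTop atTop :=
    tendsto_atTop_mono (fun n => Nat.le_add_right_of_le (Nat.le_mul_of_pos_left n hm))
      tendsto_id
  have hsplit : (fun n : ℕ =>
        (‖(⇑A)^[n] x‖ / ‖((m * n + k).factorial : K)‖) ^ (1 / ((m * n + k : ℕ) : ℝ)))
      =ᶠ[atTop] (fun n => u n ^ ((n : ℝ) / ((m * n + k : ℕ) : ℝ))) *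
        fun n => (‖((m * n + k).factorial : K)‖ ^ (1 / ((m * n + k : ℕ) : ℝ)))⁻¹ := by
    filter_upwards [eventually_ne_atTop 0] with n hn
    have hexp : 1 / (n : ℝ) * (n / ((m * n + k : ℕ) : ℝ)) = 1 / ((m * n + k : ℕ) : ℝ) := by
      field_simp
    simp only [Pi.mul_apply, u]
    rw [Real.div_rpow (norm_nonneg _) (norm_nonneg _), ← Real.rpow_mul (norm_nonneg _), hexp]
    exact div_eq_mul_inv _ _
  have hfact : Tendsto
      (fun n : ℕ => (‖((m * n + k).factorial : K)‖ ^ (1 / ((m * n + k : ℕ) : ℝ)))⁻¹) atTop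
      (𝓝 ((p : ℝ) ^ (1 / ((p : ℝ) - 1)))) :=
    (tendsto_inv_norm_factorial_rpow hK).comp hN
  rw [limsup_congr hsplit, limsup_mul_of_tendsto (.of_forall fun n => by positivity)
    (isBoundedUnder_rpow_of_tendsto hu hu_bdd (.of_forall fun n => by positivity) he)
    (.of_forall fun n => by positivity) hfact, hroot]

theorem mittag_leffler_radius
    {p : ℕ} [Fact p.Prime]
    {K : Type*} [NontriviallyNormedField K] [CompleteSpace K] [IsAlgClosed K]
    [IsUltrametricDist K] [Algebra ℚ_[p] K]
    (hK : ∀ q : ℚ_[p], ‖algebraMap ℚ_[p] K q‖ = ‖q‖)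
    {B : Type*} [NormedAddCommGroup B] [NormedSpace K B] [CompleteSpace B]
    [IsUltrametricDist B]
    (D : Submodule K B) (A : B →ₗ[K] B)
    (hA : IsClosed {q : B × B | q.1 ∈ D ∧ A q.1 = q.2})
    (m : ℕ) (hm : 1 ≤ m) (k : ℕ) (hk : k < m)
    (x : B)
    (hxdom : ∀ n : ℕ, (⇑A)^[n] x ∈ D)
    (hxE : ∃ α > (0 : ℝ), ∃ c > (0 : ℝ), ∀ n : ℕ, ‖(⇑A)^[n] x‖ ≤ c * α ^ n)
    (σ : ℝ)
    (hσdef : σ = Filter.limsup (fun n : ℕ => ‖(⇑A)^[n] x‖ ^ (1 / (n : ℝ))) atTop)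
    (hσpos : 0 < σ) :
    Filter.limsup
        (fun n : ℕ =>
          (‖(⇑A)^[n] x‖ / ‖((m * n + k).factorial : K)‖) ^ (1 / ((m * n + k : ℕ) : ℝ)))
        atTop
      = σ ^ (1 / (m : ℝ)) * (p : ℝ) ^ (1 / ((p : ℝ) - 1)) :=
  mittag_leffler_radius_general hK A m hm k x hxE σ hσdef hσpos
end

section
/- Suppose the Cauchy problem y^{(m)}(z) = A y(z), y^{(k)}(0) = y_k (k = 0,…,m−1) has a solution y in 𝔄_loc(𝔅), i.e., a locally analytic 𝔅-valued solution y(z) = Σ_{j≥0} c_j z^j with values in 𝒟(A). Then necessarily each initial datum y_k belongs to E(A); that is, for each k ∈ {0,…,m−1} there exist constants c > 0 and α > 0 such that ‖A^n y_k‖ ≤ c·α^n for all n ∈ ℕ. -/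
open Filter Topology

/-!
STATEMENT 1. `ℂ_[p]` is axiomatized as a complete, algebraically closed, nonarchimedean
nontrivially normed field `K` with an isometric `ℚ_[p]`-algebra structure.  The closed
operator `A` with domain `D = 𝒟(A)` is a submodule `D` together with a total linear map
`A` (its restriction to `D` is the operator), the graph `{(x, A x) | x ∈ D}` being closed.
-/

/-- `y(z) = Σ cⱼ zʲ` is a solution in `𝔄_loc(𝔅)` of the Cauchy problem
`y⁽ᵐ⁾ = A y`, `y⁽ᵏ⁾(0) = yinit k` (`k = 0, …, m-1`), on the disk `‖z‖ < r`. -/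
def IsCauchySolution {K : Type*} [NontriviallyNormedField K]
    {B : Type*} [NormedAddCommGroup B] [NormedSpace K B]
    (D : Submodule K B) (A : B →ₗ[K] B) (m : ℕ) (yinit : ℕ → B)
    (y : K → B) (c : ℕ → B) (r : ℝ) : Prop :=
  0 < r ∧
  Filter.Tendsto (fun j : ℕ => ‖c j‖ * r ^ j) Filter.atTop (nhds 0) ∧
  (∀ z : K, ‖z‖ < r → HasSum (fun j : ℕ => z ^ j • c j) (y z)) ∧
  (∀ z : K, ‖z‖ < r → y z ∈ D) ∧
  (∀ i < m, ∀ z : K, ‖z‖ < r → DifferentiableAt K (iteratedDeriv i y) z) ∧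
  (∀ z : K, ‖z‖ < r → iteratedDeriv m y z = A (y z)) ∧
  (∀ k < m, iteratedDeriv k y 0 = yinit k ∧ (k.factorial : K) • c k = yinit k)

/-!
The solution is analytic on the disk, and the pair `(y⁽ⁱ⁾, y⁽ⁱ⁺ᵐ⁾)` lies in the graph of `A`
for `i = 0`. The graph is a closed subspace and derivatives are limits of difference quotients,
so this persists for every `i`; hence `Aⁿ y⁽ᵏ⁾(0) = y⁽ᵏ⁺ⁿᵐ⁾(0) = (k + nm)! c_{k+nm}`. Over a
nonarchimedean field `‖j!‖ ≤ 1`, and `‖c_j‖ rʲ` is bounded, so `‖Aⁿ y_k‖ ≤ C (r⁻ᵐ)ⁿ`.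
-/

namespace FormalMultilinearSeries

variable {𝕜 E : Type*} [NontriviallyNormedField 𝕜] [NormedAddCommGroup E] [NormedSpace 𝕜 E]

def ofCoeffs (c : ℕ → E) : FormalMultilinearSeries 𝕜 𝕜 E :=
  fun n => ContinuousMultilinearMap.mkPiRing 𝕜 (Fin n) (c n)

@[simp]
theorem coeff_ofCoeffs (c : ℕ → E) (n : ℕ) :
    (ofCoeffs c : FormalMultilinearSeries 𝕜 𝕜 E).coeff n = c n := by
  simp [ofCoeffs, coeff, ContinuousMultilinearMap.mkPiRing_apply]

theorem hasFPowerSeriesOnBall_ofCoeffs {f : 𝕜 → E} {c : ℕ → E} {r : ℝ} (hr : 0 < r)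
    (hc : Tendsto (fun j => ‖c j‖ * r ^ j) atTop (𝓝 0))
    (hf : ∀ z : 𝕜, ‖z‖ < r → HasSum (fun j => z ^ j • c j) (f z)) :
    HasFPowerSeriesOnBall f (ofCoeffs c) 0 (ENNReal.ofReal r) where
  r_le := by
    have hnorm (n : ℕ) : ‖(ofCoeffs c : FormalMultilinearSeries 𝕜 𝕜 E) n‖ = ‖c n‖ :=
      ContinuousMultilinearMap.norm_mkPiRing _
    have hlim : Tendsto (fun n => ‖(ofCoeffs c : FormalMultilinearSeries 𝕜 𝕜 E) n‖ *
        (r.toNNReal : ℝ) ^ n) atTop (𝓝 0) := by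
      simpa only [hnorm, Real.coe_toNNReal r hr.le] using hc
    exact (ofCoeffs c : FormalMultilinearSeries 𝕜 𝕜 E).le_radius_of_tendsto hlim
  r_pos := ENNReal.ofReal_pos.2 hr
  hasSum {z} hz := by
    rw [Metric.eball_ofReal, mem_ball_zero_iff] at hz
    simpa using hf z hz

end FormalMultilinearSeries

section TaylorCoefficients

variable {𝕜 E : Type*} [NontriviallyNormedField 𝕜] [NormedAddCommGroup E] [NormedSpace 𝕜 E]
  [CompleteSpace E] {f : 𝕜 → E} {p : FormalMultilinearSeries 𝕜 𝕜 E} {x : 𝕜} {r : ENNReal}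

theorem HasFPowerSeriesOnBall.iteratedDeriv_eq_factorial_smul_coeff
    (hf : HasFPowerSeriesOnBall f p x r) (n : ℕ) :
    iteratedDeriv n f x = (n.factorial : 𝕜) • p.coeff n := by
  rw [iteratedDeriv_eq_iteratedFDeriv, ← hf.factorial_smul 1, Nat.cast_smul_eq_nsmul,
    FormalMultilinearSeries.apply_eq_pow_smul_coeff, one_pow, one_smul]

theorem HasFPowerSeriesOnBall.norm_iteratedDeriv_le_norm_coeff [IsUltrametricDist 𝕜]
    (hf : HasFPowerSeriesOnBall f p x r) (n : ℕ) :
    ‖iteratedDeriv n f x‖ ≤ ‖p.coeff n‖ := by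
  rw [hf.iteratedDeriv_eq_factorial_smul_coeff, norm_smul]
  exact mul_le_of_le_one_left (norm_nonneg _) (IsUltrametricDist.norm_natCast_le_one 𝕜 _)

end TaylorCoefficients

theorem exists_norm_le_mul_inv_pow_of_tendsto {E : Type*} [SeminormedAddCommGroup E]
    {c : ℕ → E} {r : ℝ} (hr : 0 < r) (hc : Tendsto (fun j => ‖c j‖ * r ^ j) atTop (𝓝 0)) :
    ∃ C > 0, ∀ j, ‖c j‖ ≤ C * r⁻¹ ^ j := by
  obtain ⟨C, hC⟩ := hc.bddAbove_range
  refine ⟨max C 1, by positivity, fun j => ?_⟩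
  calc ‖c j‖ = (‖c j‖ * r ^ j) * r⁻¹ ^ j := by
        rw [mul_assoc, ← mul_pow, mul_inv_cancel₀ hr.ne', one_pow, mul_one]
    _ ≤ max C 1 * r⁻¹ ^ j := by
      gcongr
      exact (hC ⟨j, rfl⟩).trans (le_max_left C 1)

theorem HasDerivAt.mem_of_eventually_mem {𝕜 F : Type*} [NontriviallyNormedField 𝕜]
    [NormedAddCommGroup F] [NormedSpace 𝕜 F] {f : 𝕜 → F} {f' : F} {z : 𝕜} {S : Submodule 𝕜 F}
    (hS : IsClosed (S : Set F)) (hf : HasDerivAt f f' z) (h : ∀ᶠ w in 𝓝 z, f w ∈ S) :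
    f' ∈ S := by
  refine hS.mem_of_tendsto (hasDerivAt_iff_tendsto_slope.mp hf) ?_
  filter_upwards [nhdsWithin_le_nhds h] with w hw
  rw [slope_def_module]
  exact S.smul_mem _ (S.sub_mem hw h.self_of_nhds)

theorem LinearMap.mem_graph_toPMap_iff {R E F : Type*} [Ring R] [AddCommGroup E] [Module R E]
    [AddCommGroup F] [Module R F] (A : E →ₗ[R] F) (D : Submodule R E) {q : E × F} :
    q ∈ (A.toPMap D).graph ↔ q.1 ∈ D ∧ A q.1 = q.2 := by
  simp [LinearPMap.mem_graph_iff, LinearMap.toPMap_apply]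

theorem LinearMap.coe_graph_toPMap {R E F : Type*} [Ring R] [AddCommGroup E] [Module R E]
    [AddCommGroup F] [Module R F] (A : E →ₗ[R] F) (D : Submodule R E) :
    ((A.toPMap D).graph : Set (E × F)) = {q | q.1 ∈ D ∧ A q.1 = q.2} :=
  Set.ext fun _ => A.mem_graph_toPMap_iff D

theorem iteratedDeriv_mem_graph {𝕜 E : Type*} [NontriviallyNormedField 𝕜] [NormedAddCommGroup E]
    [NormedSpace 𝕜 E] [CompleteSpace E] {T : E →ₗ.[𝕜] E} (hT : T.IsClosed) {f : 𝕜 → E}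
    {U : Set 𝕜} (hU : IsOpen U) (hf : AnalyticOnNhd 𝕜 f U) {m : ℕ}
    (hode : ∀ z ∈ U, (f z, iteratedDeriv m f z) ∈ T.graph) (i : ℕ) :
    ∀ z ∈ U, (iteratedDeriv i f z, iteratedDeriv (i + m) f z) ∈ T.graph := by
  induction i with
  | zero => simpa using hode
  | succ i ih =>
    intro z hz
    have hderiv (j : ℕ) : DifferentiableAt 𝕜 (iteratedDeriv j f) z := by
      rw [iteratedDeriv_eq_iterate]
      exact (hf.iterated_deriv j z hz).differentiableAt
    rw [iteratedDeriv_succ, Nat.add_right_comm, iteratedDeriv_succ]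
    exact ((hderiv i).hasDerivAt.prodMk (hderiv (i + m)).hasDerivAt).mem_of_eventually_mem hT
      (eventually_of_mem (hU.mem_nhds hz) ih)

theorem Function.iterate_apply_eq_of_apply_eq_add {α : Type*} {g : α → α} {x : ℕ → α} {m : ℕ}
    (h : ∀ i, g (x i) = x (i + m)) (k n : ℕ) : g^[n] (x k) = x (k + n * m) := by
  induction n with
  | zero => simp
  | succ n ih => rw [Function.iterate_succ_apply', ih, h, add_assoc, ← Nat.succ_mul]

theorem initial_data_entire_of_solvable_general
    {K : Type*} [NontriviallyNormedField K]
    [IsUltrametricDist K]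
    {B : Type*} [NormedAddCommGroup B] [NormedSpace K B] [CompleteSpace B]
    (D : Submodule K B) (A : B →ₗ[K] B)
    (hA : IsClosed {q : B × B | q.1 ∈ D ∧ A q.1 = q.2})
    (m : ℕ) (yinit : ℕ → B)
    (y : K → B) (c : ℕ → B) (r : ℝ)
    (hsol : IsCauchySolution D A m yinit y c r) :
    ∀ k < m, (∀ n : ℕ, (⇑A)^[n] (yinit k) ∈ D) ∧
      ∃ C > (0 : ℝ), ∃ α > (0 : ℝ), ∀ n : ℕ, ‖(⇑A)^[n] (yinit k)‖ ≤ C * α ^ n := by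
  obtain ⟨hr, hc, hsum, hD, -, hode, hinit⟩ := hsol
  have hy := FormalMultilinearSeries.hasFPowerSeriesOnBall_ofCoeffs hr hc hsum
  have hT : (A.toPMap D).IsClosed := by rwa [LinearPMap.IsClosed, A.coe_graph_toPMap]
  have hgraph (i : ℕ) :
      iteratedDeriv i y 0 ∈ D ∧ A (iteratedDeriv i y 0) = iteratedDeriv (i + m) y 0 := by
    refine (A.mem_graph_toPMap_iff D).1 <| iteratedDeriv_mem_graph hT Metric.isOpen_ball
      (by simpa using hy.analyticOnNhd) (fun z hz => ?_) i 0 (Metric.mem_ball_self hr)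
    rw [mem_ball_zero_iff] at hz
    exact (A.mem_graph_toPMap_iff D).2 ⟨hD z hz, (hode z hz).symm⟩
  have hiter := Function.iterate_apply_eq_of_apply_eq_add fun i => (hgraph i).2
  obtain ⟨C, hC, hcC⟩ := exists_norm_le_mul_inv_pow_of_tendsto hr hc
  intro k hk
  rw [← (hinit k hk).1]
  refine ⟨fun n => hiter k n ▸ (hgraph _).1, C * r⁻¹ ^ k, by positivity, r⁻¹ ^ m, by positivity,
    fun n => ?_⟩
  calc ‖A^[n] (iteratedDeriv k y 0)‖ = ‖iteratedDeriv (k + n * m) y 0‖ := by rw [hiter]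
    _ ≤ ‖c (k + n * m)‖ := by simpa using hy.norm_iteratedDeriv_le_norm_coeff (k + n * m)
    _ ≤ C * r⁻¹ ^ (k + n * m) := hcC _
    _ = C * r⁻¹ ^ k * (r⁻¹ ^ m) ^ n := by rw [pow_add, ← pow_mul, mul_comm m n, mul_assoc]

theorem initial_data_entire_of_solvable
    {p : ℕ} [Fact p.Prime]
    {K : Type*} [NontriviallyNormedField K] [CompleteSpace K] [IsAlgClosed K]
    [IsUltrametricDist K] [Algebra ℚ_[p] K]
    (hK : ∀ q : ℚ_[p], ‖algebraMap ℚ_[p] K q‖ = ‖q‖)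
    {B : Type*} [NormedAddCommGroup B] [NormedSpace K B] [CompleteSpace B]
    [IsUltrametricDist B]
    (D : Submodule K B) (A : B →ₗ[K] B)
    (hA : IsClosed {q : B × B | q.1 ∈ D ∧ A q.1 = q.2})
    (m : ℕ) (hm : 1 ≤ m) (yinit : ℕ → B)
    (y : K → B) (c : ℕ → B) (r : ℝ)
    (hsol : IsCauchySolution D A m yinit y c r) :
    ∀ k < m, (∀ n : ℕ, (⇑A)^[n] (yinit k) ∈ D) ∧
      ∃ C > (0 : ℝ), ∃ α > (0 : ℝ), ∀ n : ℕ, ‖(⇑A)^[n] (yinit k)‖ ≤ C * α ^ n :=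
  initial_data_entire_of_solvable_general D A hA m yinit y c r hsol
end

section
/- Let y(z) = Σ_{j≥0} c_j z^j be a solution in 𝔄_loc(𝔅) of the Cauchy problem y^{(m)}(z) = A y(z), y^{(k)}(0) = y_k (k = 0,…,m−1), convergent with y(z) ∈ 𝒟(A) for |z|_p < r. Then for every n ∈ ℕ the derivatives satisfy y^{(n)}(z) ∈ 𝒟(A) for |z|_p < r, y^{(mn+k)}(z) = A^n y^{(k)}(z) for all |z|_p < r, and in particular each y_k belongs to 𝒟(A^n) with A^n y_k = (mn+k)!·c_{mn+k}. -/
open Filter Topology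

theorem derivatives_in_domain_and_coefficients
    {p : ℕ} [Fact p.Prime]
    {K : Type*} [NontriviallyNormedField K] [CompleteSpace K] [IsAlgClosed K]
    [IsUltrametricDist K] [Algebra ℚ_[p] K]
    (hK : ∀ q : ℚ_[p], ‖algebraMap ℚ_[p] K q‖ = ‖q‖)
    {B : Type*} [NormedAddCommGroup B] [NormedSpace K B] [CompleteSpace B]
    [IsUltrametricDist B]
    (D : Submodule K B) (A : B →ₗ[K] B)
    (hA : IsClosed {q : B × B | q.1 ∈ D ∧ A q.1 = q.2})
    (m : ℕ) (hm : 1 ≤ m) (yinit : ℕ → B)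
    (y : K → B) (c : ℕ → B) (r : ℝ)
    (hsol : IsCauchySolution D A m yinit y c r) :
    (∀ n : ℕ, ∀ z : K, ‖z‖ < r → iteratedDeriv n y z ∈ D) ∧
    (∀ n : ℕ, ∀ k < m, ∀ z : K, ‖z‖ < r →
      iteratedDeriv (m * n + k) y z = (⇑A)^[n] (iteratedDeriv k y z)) ∧
    (∀ n : ℕ, ∀ k < m,
      (∀ j < n, (⇑A)^[j] (yinit k) ∈ D) ∧
      (⇑A)^[n] (yinit k) = ((m * n + k).factorial : K) • c (m * n + k)) := by
  obtain ⟨hr, htend, hsum, hD, -, hODE, hinit⟩ := hsol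
  -- The power series of `y`
  set P : FormalMultilinearSeries K K B :=
    fun n => ContinuousMultilinearMap.mkPiRing K (Fin n) (c n) with hPdef
  have hPapp : ∀ (n : ℕ) (w : K), (P n fun _ => w) = w ^ n • c n := by
    intro n w
    simp [hPdef, ContinuousMultilinearMap.mkPiRing_apply]
  have hrad : ENNReal.ofReal r ≤ P.radius := by
    have : Tendsto (fun n : ℕ => ‖P n‖ * (r.toNNReal : ℝ) ^ n) atTop (𝓝 0) := by
      simpa [hPdef, ContinuousMultilinearMap.norm_mkPiRing,
        Real.coe_toNNReal r hr.le] using htend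
    simpa [ENNReal.ofReal] using P.le_radius_of_tendsto this
  have hps : HasFPowerSeriesOnBall y P 0 (ENNReal.ofReal r) :=
    { r_le := hrad
      r_pos := ENNReal.ofReal_pos.mpr hr
      hasSum := by
        intro w hw
        rw [Metric.emetric_ball] at hw
        simp only [Metric.mem_ball, dist_zero_right] at hw
        simpa [hPapp] using hsum w hw }
  -- `y` and all its derivatives are analytic on the ball
  have hopen : IsOpen (Metric.ball (0:K) r) := Metric.isOpen_ball
  have han : ∀ n : ℕ, AnalyticOnNhd K (deriv^[n] y) (Metric.ball (0:K) r) := by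
    intro n
    induction n with
    | zero => simpa [Metric.emetric_ball] using hps.analyticOnNhd
    | succ n ih =>
      rw [Function.iterate_succ']
      exact ih.deriv_of_isOpen hopen
  have hder : ∀ (n : ℕ) (z : K), ‖z‖ < r →
      HasDerivAt (deriv^[n] y) (deriv^[n+1] y z) z := by
    intro n z hz
    have hd : DifferentiableAt K (deriv^[n] y) z :=
      ((han n z (by simpa using hz)).differentiableAt)
    have := hd.hasDerivAt
    rwa [show deriv (deriv^[n] y) z = deriv^[n+1] y z from
      (Function.iterate_succ_apply' deriv n y ▸ rfl)] at this
  -- Key claim, proved by induction using closedness of the graph of `A`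
  have key : ∀ (n : ℕ) (z : K), ‖z‖ < r →
      deriv^[n] y z ∈ D ∧ A (deriv^[n] y z) = deriv^[m+n] y z := by
    intro n
    induction n with
    | zero =>
      intro z hz
      refine ⟨hD z hz, ?_⟩
      have := hODE z hz
      rw [iteratedDeriv_eq_iterate] at this
      simpa using this.symm
    | succ n ih =>
      intro z hz
      have hz' : ∀ᶠ w in 𝓝[≠] z, ‖w‖ < r := by
        have : Metric.ball (0:K) r ∈ 𝓝 z := hopen.mem_nhds (by simpa using hz)
        filter_upwards [nhdsWithin_le_nhds this] with w hw
        simpa using hw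
      have h1 : Tendsto (slope (deriv^[n] y) z) (𝓝[≠] z) (𝓝 (deriv^[n+1] y z)) :=
        hasDerivAt_iff_tendsto_slope.mp (hder n z hz)
      have h2 : Tendsto (slope (deriv^[m+n] y) z) (𝓝[≠] z)
          (𝓝 (deriv^[m+n+1] y z)) :=
        hasDerivAt_iff_tendsto_slope.mp (hder (m+n) z hz)
      have hmem : ∀ᶠ w in 𝓝[≠] z,
          (slope (deriv^[n] y) z w, slope (deriv^[m+n] y) z w) ∈
            {q : B × B | q.1 ∈ D ∧ A q.1 = q.2} := by
        filter_upwards [hz'] with w hw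
        refine ⟨?_, ?_⟩
        · rw [slope_def_module]
          exact D.smul_mem _ (D.sub_mem (ih w hw).1 (ih z hz).1)
        · rw [slope_def_module, slope_def_module, map_smul, map_sub,
            (ih w hw).2, (ih z hz).2]
      have hlim := hA.mem_of_tendsto (h1.prodMk_nhds h2) hmem
      exact ⟨hlim.1, hlim.2⟩
  -- Iterated form of the key claim
  have key2 : ∀ (n j : ℕ) (z : K), ‖z‖ < r →
      deriv^[m * n + j] y z = (⇑A)^[n] (deriv^[j] y z) := by
    intro n
    induction n with
    | zero => intro j z hz; simp
    | succ n ih =>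
      intro j z hz
      have h1 := (key (m * n + j) z hz).2
      calc deriv^[m * (n+1) + j] y z = deriv^[m + (m * n + j)] y z := by
            congr 1; ring
        _ = A (deriv^[m * n + j] y z) := h1.symm
        _ = A ((⇑A)^[n] (deriv^[j] y z)) := by rw [ih j z hz]
        _ = (⇑A)^[n+1] (deriv^[j] y z) := (Function.iterate_succ_apply' _ _ _).symm
  -- Taylor coefficients
  have hcoeff : ∀ j : ℕ, iteratedDeriv j y 0 = (j.factorial : K) • c j := by
    intro j
    have h := hps.factorial_smul (1 : K) j
    rw [hPapp, one_pow, one_smul] at h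
    rw [iteratedDeriv_eq_iteratedFDeriv, ← h, ← Nat.cast_smul_eq_nsmul K]
  have h0r : ‖(0:K)‖ < r := by simpa using hr
  refine ⟨?_, ?_, ?_⟩
  · intro n z hz
    rw [iteratedDeriv_eq_iterate]
    exact (key n z hz).1
  · intro n k hk z hz
    rw [iteratedDeriv_eq_iterate, iteratedDeriv_eq_iterate]
    exact key2 n k z hz
  · intro n k hk
    have hy0 : yinit k = deriv^[k] y 0 := by
      rw [← (hinit k hk).1, iteratedDeriv_eq_iterate]
    constructor
    · intro j hj
      rw [hy0, ← key2 j k 0 h0r]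
      exact (key (m * j + k) 0 h0r).1
    · rw [hy0, ← key2 n k 0 h0r, ← iteratedDeriv_eq_iterate, hcoeff]
end

section
/- Suppose y_k ∈ E(A) for k = 0,…,m−1. Then the function y(z) = Σ_{k=0}^{m−1} F_k(z;A) y_k = Σ_{k=0}^{m−1} Σ_{n≥0} z^{mn+k} A^n y_k/(mn+k)! is a solution in 𝔄_loc(𝔅) of the Cauchy problem y^{(m)}(z) = A y(z), y^{(k)}(0) = y_k (k = 0,…,m−1): the series converges for |z|_p < r where r = σ^{−1/m} p^{−1/(p−1)} and σ = max_k σ(y_k;A) (with r = ∞ if σ = 0), y(z) ∈ 𝒟(A) there, y^{(m)}(z) = A y(z) for |z|_p < r, and y^{(k)}(0) = y_k. -/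
/-!
Legendre's formula `v_p(n!) ≤ n/(p-1)` gives `‖(n!)⁻¹‖ ≤ ρ⁻ⁿ` with `ρ = p^(-1/(p-1))`. If
`σ s^m < 1`, then `‖Aⁿ y_k‖ (s^m)ⁿ` is bounded, so `‖c_{mn+k}‖ (sρ)^{mn+k}` is bounded and the
power series `Σ z^j c_j` has radius at least `sρ`; such `s` come arbitrarily close to `σ^(-1/m)`.
Termwise, the `m`-th derivative of the series has coefficients `(j+m)!/j! · c_{j+m} = A c_j`, so
the partial sums of `y` and of `y⁽ᵐ⁾` lie together in the graph of `A`, and closedness of the graph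
gives `y z ∈ 𝒟(A)` and `y⁽ᵐ⁾ z = A (y z)`.
-/

open Filter Topology
open scoped Nat ENNReal
open FormalMultilinearSeries

theorem Nat.exists_eq_mul_add_of_pos {m : ℕ} (hm : 0 < m) (j : ℕ) :
    ∃ n, ∃ k < m, j = m * n + k :=
  ⟨j / m, j % m, Nat.mod_lt j hm, (Nat.div_add_mod j m).symm⟩

theorem Nat.cast_descFactorial_mul_inv_factorial_add {K : Type*} [Field K] [CharZero K]
    (n m : ℕ) : ((n + m).descFactorial m : K) * ((n + m)! : K)⁻¹ = (n ! : K)⁻¹ := by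
  rw [← Nat.factorial_mul_descFactorial (Nat.le_add_left m n), Nat.add_sub_cancel, Nat.cast_mul]
  field_simp

namespace Padic

variable {p : ℕ} [Fact p.Prime]

theorem pow_le_norm_factorial (n : ℕ) :
    ((p : ℝ) ^ (-1 / ((p : ℝ) - 1))) ^ n ≤ ‖(n ! : ℚ_[p])‖ := by
  have hp : (1 : ℝ) < p := by exact_mod_cast (Fact.out : p.Prime).one_lt
  have hlegendre : (padicValNat p n ! : ℝ) ≤ n / ((p : ℝ) - 1) := by
    have h := (sub_one_mul_padicValNat_factorial (p := p) n).trans_le (Nat.sub_le _ _)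
    rw [le_div_iff₀ (by linarith), mul_comm, ← Nat.cast_pred (Fact.out : p.Prime).pos]
    exact_mod_cast h
  rw [norm_eq_zpow_neg_valuation (by exact_mod_cast n.factorial_ne_zero), valuation_natCast,
    ← Real.rpow_natCast, ← Real.rpow_mul (by positivity), ← Real.rpow_intCast]
  apply Real.rpow_le_rpow_of_exponent_le hp.le
  simp only [Int.cast_neg, Int.cast_natCast]
  linarith [show -1 / ((p : ℝ) - 1) * n = -(n / ((p : ℝ) - 1)) by ring]

end Padic

theorem norm_inv_factorial_mul_pow_le_one {p : ℕ} [Fact p.Prime] {K : Type*} [NormedField K]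
    [Algebra ℚ_[p] K] (hK : ∀ q : ℚ_[p], ‖algebraMap ℚ_[p] K q‖ = ‖q‖) (n : ℕ) :
    ‖(n ! : K)⁻¹‖ * ((p : ℝ) ^ (-1 / ((p : ℝ) - 1))) ^ n ≤ 1 := by
  have hnorm : ‖(n ! : K)‖ = ‖(n ! : ℚ_[p])‖ := by
    rw [← hK, map_natCast]
  rw [norm_inv, hnorm, inv_mul_le_iff₀ (by simpa using n.factorial_ne_zero), mul_one]
  exact Padic.pow_le_norm_factorial n

namespace Real

theorem isBoundedUnder_rpow_one_div_of_le_mul_pow {a : ℕ → ℝ} {C α : ℝ} (hα : 0 ≤ α)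
    (ha : ∀ n, 0 ≤ a n) (h : ∀ n, a n ≤ C * α ^ n) :
    IsBoundedUnder (· ≤ ·) atTop fun n => a n ^ (1 / (n : ℝ)) := by
  refine isBoundedUnder_of_eventually_le (a := max C 1 * α) ?_
  filter_upwards [eventually_ne_atTop 0] with n hn
  rw [one_div, rpow_inv_le_iff_of_pos (ha n) (by positivity) (by positivity), rpow_natCast,
    mul_pow]
  calc a n ≤ C * α ^ n := h n
    _ ≤ max C 1 ^ n * α ^ n := by
      gcongr
      exact (le_max_left C 1).trans (le_self_pow₀ (le_max_right C 1) hn)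

theorem bddAbove_range_mul_pow_of_limsup_mul_lt_one {a : ℕ → ℝ} (ha : ∀ n, 0 ≤ a n)
    (hbdd : IsBoundedUnder (· ≤ ·) atTop fun n => a n ^ (1 / (n : ℝ))) {t : ℝ} (ht : 0 < t)
    (h : limsup (fun n => a n ^ (1 / (n : ℝ))) atTop * t < 1) :
    BddAbove (Set.range fun n => a n * t ^ n) := by
  rw [← lt_div_iff₀ ht, one_div] at h
  refine (isBoundedUnder_of_eventually_le (a := 1) ?_).bddAbove_range
  filter_upwards [eventually_lt_of_limsup_lt h hbdd, eventually_ne_atTop 0] with n hn hn0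
  rw [one_div] at hn
  have han : a n ≤ t⁻¹ ^ n := by
    simpa using (rpow_inv_le_iff_of_pos (ha n) (by positivity) (by positivity)).1 hn.le
  calc a n * t ^ n ≤ t⁻¹ ^ n * t ^ n := by gcongr
    _ = 1 := by rw [← mul_pow, inv_mul_cancel₀ ht.ne', one_pow]

end Real

theorem exists_pos_lt_and_mul_pow_lt_one {σ x : ℝ} {m : ℕ} (hm : m ≠ 0)
    (h : σ ≤ 0 ∨ x < σ ^ (-1 / (m : ℝ))) : ∃ s > 0, x < s ∧ σ * s ^ m < 1 := by
  rcases le_or_gt σ 0 with hσ | hσ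
  · refine ⟨max x 0 + 1, by positivity, by linarith [le_max_left x 0], ?_⟩
    exact (mul_nonpos_of_nonpos_of_nonneg hσ (by positivity)).trans_lt one_pos
  · obtain ⟨s, hs, hsσ⟩ :=
      exists_between (max_lt (h.resolve_left hσ.not_ge) (Real.rpow_pos_of_pos hσ _))
    refine ⟨s, (le_max_right _ _).trans_lt hs, (le_max_left _ _).trans_lt hs, ?_⟩
    calc σ * s ^ m < σ * (σ ^ (-1 / (m : ℝ))) ^ m := by
          gcongr
          exact (le_max_right _ _).trans hs.le
      _ = 1 := by
        rw [← Real.rpow_natCast, ← Real.rpow_mul hσ.le, div_mul_cancel₀ _ (by simpa using hm),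
          Real.rpow_neg_one, mul_inv_cancel₀ hσ.ne']

theorem mem_and_apply_eq_of_hasSum {R B ι : Type*} [Semiring R] [AddCommMonoid B] [Module R B]
    [TopologicalSpace B] [ContinuousAdd B] {D : Submodule R B} {A : B →ₗ[R] B}
    (hA : IsClosed {q : B × B | q.1 ∈ D ∧ A q.1 = q.2}) {f : ι → B} {x y : B}
    (hD : ∀ i, f i ∈ D) (hx : HasSum f x) (hy : HasSum (fun i => A (f i)) y) :
    x ∈ D ∧ A x = y :=
  hA.mem_of_tendsto (hx.prodMk hy) <| Eventually.of_forall fun s =>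
    ⟨by rw [Prod.fst_sum]; exact D.sum_mem fun i _ => hD i,
      by rw [Prod.fst_sum, Prod.snd_sum, map_sum]⟩

namespace FormalMultilinearSeries

variable (K : Type*) [NontriviallyNormedField K] {B : Type*} [NormedAddCommGroup B]
  [NormedSpace K B]

noncomputable def ofCoeff (c : ℕ → B) : FormalMultilinearSeries K K B :=
  fun n => ContinuousMultilinearMap.mkPiRing K (Fin n) (c n)

variable {K}

@[simp]
theorem coeff_ofCoeff (c : ℕ → B) (n : ℕ) : (ofCoeff K c).coeff n = c n := by
  simp [ofCoeff, coeff]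

theorem hasFPowerSeriesOnBall_ofCoeff [CompleteSpace B] {c : ℕ → B} {f : K → B}
    (hf : ∀ z, f z = ∑' n, z ^ n • c n) (hr : 0 < (ofCoeff K c).radius) :
    HasFPowerSeriesOnBall f (ofCoeff K c) 0 (ofCoeff K c).radius := by
  rw [show f = (ofCoeff K c).sum from funext fun z => by simp [hf, FormalMultilinearSeries.sum]]
  exact (ofCoeff K c).hasFPowerSeriesOnBall hr

end FormalMultilinearSeries

namespace HasFPowerSeriesOnBall

variable {K : Type*} [NontriviallyNormedField K] {B : Type*} [NormedAddCommGroup B]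
  [NormedSpace K B] {f : K → B} {q : FormalMultilinearSeries K K B} {x : K} {r : ℝ≥0∞}

theorem hasSum_pow_smul_coeff (h : HasFPowerSeriesOnBall f q x r) {z : K} (hz : ‖z‖ₑ < r) :
    HasSum (fun n => z ^ n • q.coeff n) (f (x + z)) := by
  simpa only [apply_eq_pow_smul_coeff] using h.hasSum (by simpa using hz)

variable [CompleteSpace B]

theorem exists_deriv (h : HasFPowerSeriesOnBall f q x r) :
    ∃ q' : FormalMultilinearSeries K K B, HasFPowerSeriesOnBall (deriv f) q' x r ∧
      ∀ n, q'.coeff n = (n + 1) • q.coeff (n + 1) :=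
  ⟨(ContinuousLinearMap.apply K B 1).compFormalMultilinearSeries q.derivSeries,
    (ContinuousLinearMap.apply K B 1).comp_hasFPowerSeriesOnBall (f := fderiv K f) h.fderiv,
    derivSeries_coeff_one q⟩

theorem exists_iterate_deriv (h : HasFPowerSeriesOnBall f q x r) (i : ℕ) :
    ∃ q' : FormalMultilinearSeries K K B, HasFPowerSeriesOnBall (deriv^[i] f) q' x r ∧
      ∀ n, q'.coeff n = (n + i).descFactorial i • q.coeff (n + i) := by
  induction i with
  | zero => exact ⟨q, h, by simp⟩
  | succ i ih =>
    obtain ⟨q', hq', hcoeff⟩ := ih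
    obtain ⟨q'', hq'', hcoeff'⟩ := hq'.exists_deriv
    refine ⟨q'', Function.iterate_succ_apply' deriv i f ▸ hq'', fun n => ?_⟩
    rw [hcoeff', hcoeff, ← mul_smul, show n + 1 + i = n + (i + 1) by omega,
      Nat.descFactorial_succ, show n + (i + 1) - i = n + 1 by omega]

theorem hasSum_iteratedDeriv (h : HasFPowerSeriesOnBall f q x r) (i : ℕ) {z : K}
    (hz : ‖z‖ₑ < r) :
    HasSum (fun n => z ^ n • (n + i).descFactorial i • q.coeff (n + i))
      (iteratedDeriv i f (x + z)) := by
  obtain ⟨q', hq', hcoeff⟩ := h.exists_iterate_deriv i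
  rw [iteratedDeriv_eq_iterate]
  simpa only [hcoeff] using hq'.hasSum_pow_smul_coeff hz

theorem iteratedDeriv_eq_factorial_smul_coeff_s3 (h : HasFPowerSeriesOnBall f q x r) (k : ℕ) :
    iteratedDeriv k f x = k ! • q.coeff k := by
  rw [iteratedDeriv_eq_iteratedFDeriv, ← h.factorial_smul 1 k, apply_eq_pow_smul_coeff, one_pow,
    one_smul]

theorem mem_and_iteratedDeriv_eq {D : Submodule K B} {A : B →ₗ[K] B}
    (hA : IsClosed {q : B × B | q.1 ∈ D ∧ A q.1 = q.2}) (h : HasFPowerSeriesOnBall f q x r)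
    {m : ℕ} (hD : ∀ j, q.coeff j ∈ D)
    (hrec : ∀ j, (j + m).descFactorial m • q.coeff (j + m) = A (q.coeff j)) {z : K}
    (hz : ‖z‖ₑ < r) :
    f (x + z) ∈ D ∧ iteratedDeriv m f (x + z) = A (f (x + z)) := by
  have hderiv := h.hasSum_iteratedDeriv m hz
  simp only [hrec, ← map_smul] at hderiv
  obtain ⟨hfD, hAf⟩ := mem_and_apply_eq_of_hasSum hA (fun j => D.smul_mem _ (hD j))
    (h.hasSum_pow_smul_coeff hz) hderiv
  exact ⟨hfD, hAf.symm⟩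

end HasFPowerSeriesOnBall

theorem le_radius_ofCoeff_of_limsup_mul_pow_lt_one {K : Type*} [NontriviallyNormedField K]
    {B : Type*} [NormedAddCommGroup B] [NormedSpace K B] {A : B → B} {m : ℕ} (hm : 0 < m)
    {yinit c : ℕ → B}
    (hc : ∀ n, ∀ k < m, c (m * n + k) = ((m * n + k)! : K)⁻¹ • A^[n] (yinit k))
    {ρ : ℝ} (hρ0 : 0 ≤ ρ) (hρ : ∀ j, ‖(j ! : K)⁻¹‖ * ρ ^ j ≤ 1)
    (hbdd : ∀ k < m, IsBoundedUnder (· ≤ ·) atTop fun n => ‖A^[n] (yinit k)‖ ^ (1 / (n : ℝ)))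
    {s : ℝ} (hs : 0 < s)
    (hlimsup : ∀ k < m, limsup (fun n => ‖A^[n] (yinit k)‖ ^ (1 / (n : ℝ))) atTop * s ^ m < 1) :
    ENNReal.ofReal (s * ρ) ≤ (ofCoeff K c).radius := by
  obtain ⟨C, hC⟩ : BddAbove
      (⋃ k ∈ {k | k < m}, Set.range fun n => ‖A^[n] (yinit k)‖ * (s ^ m) ^ n) :=
    (Set.finite_lt_nat m).bddAbove_biUnion.2 fun k hk =>
      Real.bddAbove_range_mul_pow_of_limsup_mul_lt_one (fun _ => norm_nonneg _) (hbdd k hk)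
        (by positivity) (hlimsup k hk)
  refine le_radius_of_bound _ (C * max 1 s ^ m) fun j => ?_
  obtain ⟨n, k, hk, rfl⟩ := Nat.exists_eq_mul_add_of_pos hm j
  have hCn : ‖A^[n] (yinit k)‖ * (s ^ m) ^ n ≤ C := hC (Set.mem_biUnion hk ⟨n, rfl⟩)
  have hsk : s ^ k ≤ max 1 s ^ m :=
    (pow_le_pow_left₀ hs.le (le_max_right 1 s) k).trans
      (pow_le_pow_right₀ (le_max_left 1 s) hk.le)
  rw [norm_apply_eq_norm_coef, coeff_ofCoeff, hc n k hk, norm_smul,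
    Real.coe_toNNReal _ (by positivity)]
  calc ‖((m * n + k)! : K)⁻¹‖ * ‖A^[n] (yinit k)‖ * (s * ρ) ^ (m * n + k)
      = (‖((m * n + k)! : K)⁻¹‖ * ρ ^ (m * n + k)) * (‖A^[n] (yinit k)‖ * (s ^ m) ^ n) * s ^ k := by
        ring
    _ ≤ 1 * C * max 1 s ^ m := by
        have : 0 ≤ C := (by positivity : (0 : ℝ) ≤ _).trans hCn
        gcongr
        exact hρ _
    _ = C * max 1 s ^ m := by rw [one_mul]

theorem lt_radius_ofCoeff_of_limsup_le {K : Type*} [NontriviallyNormedField K]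
    {B : Type*} [NormedAddCommGroup B] [NormedSpace K B] {A : B → B} {m : ℕ} (hm : 0 < m)
    {yinit c : ℕ → B}
    (hc : ∀ n, ∀ k < m, c (m * n + k) = ((m * n + k)! : K)⁻¹ • A^[n] (yinit k))
    {ρ : ℝ} (hρ0 : 0 < ρ) (hρ : ∀ j, ‖(j ! : K)⁻¹‖ * ρ ^ j ≤ 1)
    (hgrowth : ∀ k < m, ∃ α > (0 : ℝ), ∃ C > (0 : ℝ), ∀ n, ‖A^[n] (yinit k)‖ ≤ C * α ^ n)
    {σ : ℝ} (hσ : ∀ k < m, limsup (fun n => ‖A^[n] (yinit k)‖ ^ (1 / (n : ℝ))) atTop ≤ σ)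
    {x : ℝ} (hx : σ ≤ 0 ∨ x < σ ^ (-1 / (m : ℝ))) :
    ENNReal.ofReal (x * ρ) < (ofCoeff K c).radius := by
  have hbdd (k : ℕ) (hk : k < m) :
      IsBoundedUnder (· ≤ ·) atTop fun n => ‖A^[n] (yinit k)‖ ^ (1 / (n : ℝ)) := by
    obtain ⟨α, hα, C, -, hC⟩ := hgrowth k hk
    exact Real.isBoundedUnder_rpow_one_div_of_le_mul_pow hα.le (fun _ => norm_nonneg _) hC
  obtain ⟨s, hs, hxs, hσs⟩ := exists_pos_lt_and_mul_pow_lt_one hm.ne' hx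
  refine ((ENNReal.ofReal_lt_ofReal_iff (by positivity)).2 (by gcongr)).trans_le
    (le_radius_ofCoeff_of_limsup_mul_pow_lt_one hm hc hρ0.le hρ hbdd hs fun k hk => ?_)
  exact (mul_le_mul_of_nonneg_right (hσ k hk) (by positivity)).trans_lt hσs

theorem descFactorial_smul_coeff_add {K : Type*} [NontriviallyNormedField K] [CharZero K]
    {B : Type*} [NormedAddCommGroup B] [NormedSpace K B] {A : B →ₗ[K] B} {m : ℕ} (hm : 0 < m)
    {yinit c : ℕ → B}
    (hc : ∀ n, ∀ k < m, c (m * n + k) = ((m * n + k)! : K)⁻¹ • (⇑A)^[n] (yinit k)) (j : ℕ) :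
    (j + m).descFactorial m • c (j + m) = A (c j) := by
  obtain ⟨n, k, hk, rfl⟩ := Nat.exists_eq_mul_add_of_pos hm j
  have hc' := hc (n + 1) k hk
  rw [show m * (n + 1) + k = m * n + k + m by ring] at hc'
  rw [hc', hc n k hk, map_smul, ← Function.iterate_succ_apply' A, ← Nat.cast_smul_eq_nsmul K,
    smul_smul, Nat.cast_descFactorial_mul_inv_factorial_add]

theorem solution_exists_of_initial_data_in_EA
    {p : ℕ} [Fact p.Prime]
    {K : Type*} [NontriviallyNormedField K] [Algebra ℚ_[p] K]
    (hK : ∀ q : ℚ_[p], ‖algebraMap ℚ_[p] K q‖ = ‖q‖)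
    {B : Type*} [NormedAddCommGroup B] [NormedSpace K B] [CompleteSpace B]
    (D : Submodule K B) (A : B →ₗ[K] B)
    (hA : IsClosed {q : B × B | q.1 ∈ D ∧ A q.1 = q.2})
    (m : ℕ) (hm : 1 ≤ m) (yinit : ℕ → B)
    -- each initial datum belongs to E(A)
    (hE : ∀ k < m, (∀ n : ℕ, (⇑A)^[n] (yinit k) ∈ D) ∧
      ∃ α > (0 : ℝ), ∃ C > (0 : ℝ), ∀ n : ℕ, ‖(⇑A)^[n] (yinit k)‖ ≤ C * α ^ n)
    -- σ = max_k σ(y_k; A)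
    (σ : ℝ)
    (hσ : σ = (Finset.range m).sup' (Finset.nonempty_range_iff.mpr (by omega))
      fun k => Filter.limsup (fun n : ℕ => ‖(⇑A)^[n] (yinit k)‖ ^ (1 / (n : ℝ))) atTop)
    -- the combined coefficients of y(z) = Σ_{k<m} Σ_n z^{mn+k} Aⁿ y_k/(mn+k)!
    (c : ℕ → B)
    (hc : ∀ (n : ℕ), ∀ k < m,
      c (m * n + k) = ((m * n + k).factorial : K)⁻¹ • (⇑A)^[n] (yinit k))
    (y : K → B) (hy : ∀ z : K, y z = ∑' j : ℕ, z ^ j • c j) :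
    -- the series (and each F_k-series) converges on the disk, y takes values in 𝒟(A),
    -- satisfies y⁽ᵐ⁾ = A y there, and has the prescribed initial data
    (∀ z : K, (σ = 0 ∨ ‖z‖ < σ ^ (-(1 : ℝ) / (m : ℝ)) * (p : ℝ) ^ (-(1 : ℝ) / ((p : ℝ) - 1))) →
      Summable (fun j : ℕ => z ^ j • c j) ∧
      (∀ k < m, Summable (fun n : ℕ =>
        ((m * n + k).factorial : K)⁻¹ • z ^ (m * n + k) • (⇑A)^[n] (yinit k))) ∧
      y z ∈ D ∧
      iteratedDeriv m y z = A (y z)) ∧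
    (∀ k < m, iteratedDeriv k y 0 = yinit k) := by
  have : CharZero K := charZero_of_injective_algebraMap (algebraMap ℚ_[p] K).injective
  set ρ : ℝ := (p : ℝ) ^ (-(1 : ℝ) / ((p : ℝ) - 1))
  have hρ : 0 < ρ := Real.rpow_pos_of_pos (mod_cast (Fact.out : p.Prime).pos) _
  have hradius (x : ℝ) (hx : σ ≤ 0 ∨ x < σ ^ (-1 / (m : ℝ))) :=
    lt_radius_ofCoeff_of_limsup_le hm hc hρ (norm_inv_factorial_mul_pow_le_one hK)
      (fun k hk => (hE k hk).2)
      (fun k hk => hσ ▸ Finset.le_sup'_of_le _ (Finset.mem_range.2 hk) le_rfl) hx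
  have hball : HasFPowerSeriesOnBall y (ofCoeff K c) 0 (ofCoeff K c).radius :=
    hasFPowerSeriesOnBall_ofCoeff hy
      (by simpa using hradius 0 ((le_or_gt σ 0).imp_right (Real.rpow_pos_of_pos · _)))
  have hcD (j : ℕ) : (ofCoeff K c).coeff j ∈ D := by
    obtain ⟨n, k, hk, rfl⟩ := Nat.exists_eq_mul_add_of_pos hm j
    rw [coeff_ofCoeff, hc n k hk]
    exact D.smul_mem _ ((hE k hk).1 n)
  refine ⟨fun z hz => ?_, fun k hk => ?_⟩
  · replace hz : ‖z‖ₑ < (ofCoeff K c).radius := by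
      simpa [div_mul_cancel₀ _ hρ.ne'] using
        hradius (‖z‖ / ρ) (hz.imp le_of_eq (div_lt_iff₀ hρ).2)
    have hsum : Summable fun j => z ^ j • c j := by
      simpa using (hball.hasSum_pow_smul_coeff hz).summable
    have hsol := hball.mem_and_iteratedDeriv_eq hA hcD
      (by simpa using descFactorial_smul_coeff_add hm hc) hz
    rw [zero_add] at hsol
    refine ⟨hsum, fun k hk => ?_, hsol⟩
    refine (hsum.comp_injective ((add_left_injective k).comp
      (mul_right_injective₀ (by omega : m ≠ 0)))).congr fun n => ?_
    show z ^ (m * n + k) • c (m * n + k) = _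
    rw [hc n k hk]
    exact smul_comm _ _ _
  · have hck : c k = (k ! : K)⁻¹ • yinit k := by simpa using hc 0 k hk
    rw [hball.iteratedDeriv_eq_factorial_smul_coeff_s3, coeff_ofCoeff, hck,
      ← Nat.cast_smul_eq_nsmul K, smul_smul, mul_inv_cancel₀ (mod_cast k.factorial_ne_zero),
      one_smul]
end

section
/- Let x ∈ E(A) with σ = σ(x;A), and let r = σ^{−1/m} p^{−1/(p−1)} (r = ∞ if σ = 0). Then on the disk |z|_p < r each function F_k(·;A)x is differentiable, and the derivative relations hold: F_k'(z;A)x = F_{k−1}(z;A)x for 1 ≤ k ≤ m−1, and F_0'(z;A)x = F_{m−1}(z;A)(Ax). -/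
open Filter Topology

/-!
Legendre's formula gives `‖1/j!‖ ≤ p^{j/(p-1)}` in `ℂ_p`, so for `‖z‖ < r` one can pick `t > ‖z‖`
and `σ' > σ` with `(p^{1/(p-1)} t)^m σ' < 1`; then `t^{mn+k} ‖Aⁿx/(mn+k)!‖` tends to zero
geometrically. An ultrametric power series whose coefficients satisfy `t^j ‖a_j‖ → 0` may be
differentiated termwise on `‖z‖ < t`: the second-order Taylor remainder of `w^e` at `z` is at most
`‖w - z‖² t^{e-2}`, with no combinatorial factor. Termwise, `z^{mn+k}/(mn+k)!` differentiates to
`z^{mn+k-1}/(mn+k-1)!`, the term of `F_{k-1}`; for `k = 0` the constant term drops out and the shift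
`n ↦ n + 1` turns the rest into `F_{m-1}(·; A)(Ax)`.
-/

theorem Padic.norm_inv_factorial_le {p : ℕ} [Fact p.Prime] (j : ℕ) :
    ‖(j.factorial : ℚ_[p])⁻¹‖ ≤ ((p : ℝ) ^ (1 / ((p : ℝ) - 1))) ^ j := by
  have hp : 1 < p := (Fact.out : p.Prime).one_lt
  have hval : (p - 1) * padicValNat p j.factorial ≤ j := by
    rw [sub_one_mul_padicValNat_factorial]; exact Nat.sub_le _ _
  rw [norm_inv, Padic.norm_eq_zpow_neg_valuation (by exact_mod_cast j.factorial_ne_zero),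
    Padic.valuation_natCast, zpow_neg, inv_inv, zpow_natCast, ← Real.rpow_natCast,
    ← Real.rpow_natCast _ j, ← Real.rpow_mul (by positivity),
    Real.rpow_le_rpow_left_iff (by exact_mod_cast hp), one_div_mul_eq_div,
    le_div_iff₀ (by simpa using hp), mul_comm, ← Nat.cast_pred (by omega)]
  exact_mod_cast hval

section Ultrametric

variable {K : Type*} [NontriviallyNormedField K] [IsUltrametricDist K]

lemma norm_natCast_mul_pow_pred_mul_le {z : K} {t : ℝ} (ht : 0 ≤ t) (hz : ‖z‖ ≤ t) (e : ℕ) :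
    ‖(e : K) * z ^ (e - 1)‖ * t ≤ t ^ e := by
  cases e with
  | zero => simp
  | succ e =>
    rw [Nat.add_sub_cancel, norm_mul, norm_pow, pow_succ]
    gcongr
    exact mul_le_of_le_one_left (by positivity) (IsUltrametricDist.norm_natCast_le_one K _)
      |>.trans (pow_le_pow_left₀ (norm_nonneg z) hz e)

lemma norm_pow_sub_pow_sub_mul_mul_sq_le {w z : K} {t : ℝ} (ht : 0 ≤ t) (hw : ‖w‖ ≤ t)
    (hz : ‖z‖ ≤ t) (e : ℕ) :
    ‖w ^ e - z ^ e - e * z ^ (e - 1) * (w - z)‖ * t ^ 2 ≤ ‖w - z‖ ^ 2 * t ^ e := by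
  induction e with
  | zero => simp
  | succ e ih =>
    have hrec : w ^ (e + 1) - z ^ (e + 1) - ((e + 1 : ℕ) : K) * z ^ (e + 1 - 1) * (w - z)
        = w * (w ^ e - z ^ e - e * z ^ (e - 1) * (w - z)) + (e * z ^ (e - 1)) * (w - z) ^ 2 := by
      rcases e with _ | e
      · simp
      · simp only [Nat.add_sub_cancel]; push_cast; ring
    have hder := norm_natCast_mul_pow_pred_mul_le ht hz e
    calc _ ≤ max (‖w‖ * (‖w ^ e - z ^ e - e * z ^ (e - 1) * (w - z)‖ * t ^ 2))
              (‖(e : K) * z ^ (e - 1)‖ * t * (t * ‖w - z‖ ^ 2)) := by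
          rw [hrec]
          refine (mul_le_mul_of_nonneg_right (IsUltrametricDist.norm_add_le_max _ _)
            (by positivity)).trans (le_of_eq ?_)
          rw [max_mul_of_nonneg _ _ (by positivity), norm_mul, norm_mul, norm_pow]
          ring_nf
      _ ≤ max (t * (‖w - z‖ ^ 2 * t ^ e)) (t ^ e * (t * ‖w - z‖ ^ 2)) := by gcongr
      _ = ‖w - z‖ ^ 2 * t ^ (e + 1) := by rw [pow_succ]; ring_nf; exact max_self _

variable {B : Type*} [NormedAddCommGroup B] [NormedSpace K B] [CompleteSpace B]
  [IsUltrametricDist B]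

lemma summable_of_norm_le_of_tendsto_zero {f : ℕ → B} {g : ℕ → ℝ} (hfg : ∀ n, ‖f n‖ ≤ g n)
    (hg : Tendsto g atTop (𝓝 0)) : Summable f :=
  NonarchimedeanAddGroup.summable_of_tendsto_cofinite_zero <| by
    rw [Nat.cofinite_eq_atTop]
    exact squeeze_zero_norm hfg hg

theorem hasDerivAt_tsum_pow_smul (e : ℕ → ℕ) (b : ℕ → B) {t : ℝ}
    (hb : Tendsto (fun n => t ^ e n * ‖b n‖) atTop (𝓝 0)) {z : K} (hz : ‖z‖ < t) :
    HasDerivAt (fun w => ∑' n, w ^ e n • b n) (∑' n, ((e n : K) * z ^ (e n - 1)) • b n) z := by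
  have ht : 0 < t := (norm_nonneg z).trans_lt hz
  have hsum : ∀ w : K, ‖w‖ ≤ t → Summable fun n => w ^ e n • b n := fun w hw =>
    summable_of_norm_le_of_tendsto_zero (fun n => by rw [norm_smul, norm_pow]; gcongr) hb
  have hsum' : Summable fun n => ((e n : K) * z ^ (e n - 1)) • b n := by
    refine summable_of_norm_le_of_tendsto_zero (g := fun n => t ^ e n * ‖b n‖ / t) (fun n => ?_)
      (by simpa using hb.div_const t)
    rw [norm_smul, le_div_iff₀ ht, mul_right_comm]
    gcongr
    exact norm_natCast_mul_pow_pred_mul_le ht.le hz.le _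
  obtain ⟨D, hD⟩ := hb.bddAbove_range
  have hD0 : 0 ≤ D := (by positivity : 0 ≤ t ^ e 0 * ‖b 0‖).trans (hD ⟨0, rfl⟩)
  rw [hasDerivAt_iff_isLittleO]
  refine Asymptotics.IsBigO.trans_isLittleO (.of_bound (D / t ^ 2) ?_)
    (Asymptotics.isLittleO_pow_sub_sub z one_lt_two)
  filter_upwards [Metric.isOpen_ball.mem_nhds (mem_ball_zero_iff.mpr hz)] with w hw
  rw [mem_ball_zero_iff] at hw
  have hremainder : (∑' n, w ^ e n • b n) - (∑' n, z ^ e n • b n)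
      - (w - z) • ∑' n, ((e n : K) * z ^ (e n - 1)) • b n
      = ∑' n, (w ^ e n - z ^ e n - e n * z ^ (e n - 1) * (w - z)) • b n := by
    rw [← hsum'.tsum_const_smul, ← (hsum w hw.le).tsum_sub (hsum z hz.le),
      ← ((hsum w hw.le).sub (hsum z hz.le)).tsum_sub (hsum'.const_smul _)]
    refine tsum_congr fun n => ?_
    rw [smul_smul, sub_smul, sub_smul, mul_comm (w - z)]
  rw [hremainder, norm_pow, norm_norm]
  refine IsUltrametricDist.norm_tsum_le_of_forall_le_of_nonneg (by positivity) fun n => ?_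
  rw [norm_smul, div_mul_eq_mul_div, le_div_iff₀ (by positivity)]
  calc _ = ‖w ^ e n - z ^ e n - e n * z ^ (e n - 1) * (w - z)‖ * t ^ 2 * ‖b n‖ := by ring
    _ ≤ ‖w - z‖ ^ 2 * t ^ e n * ‖b n‖ :=
        mul_le_mul_of_nonneg_right (norm_pow_sub_pow_sub_mul_mul_sq_le ht.le hw.le hz.le _)
          (norm_nonneg _)
    _ = ‖w - z‖ ^ 2 * (t ^ e n * ‖b n‖) := by ring
    _ ≤ D * ‖w - z‖ ^ 2 := by rw [mul_comm D]; gcongr; exact hD ⟨n, rfl⟩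

end Ultrametric

lemma isBoundedUnder_rpow_inv_of_le_mul_pow {y : ℕ → ℝ} {C α : ℝ} (hy : ∀ n, 0 ≤ y n)
    (hC : 0 ≤ C) (hα : 0 ≤ α) (hyC : ∀ n, y n ≤ C * α ^ n) :
    IsBoundedUnder (· ≤ ·) atTop fun n => y n ^ (1 / (n : ℝ)) := by
  refine isBoundedUnder_of_eventually_le (a := max C 1 * α) ?_
  filter_upwards [eventually_ge_atTop 1] with n hn
  have hn' : (n : ℝ) ≠ 0 := by positivity
  calc y n ^ (1 / (n : ℝ)) ≤ (C * α ^ n) ^ (1 / (n : ℝ)) :=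
        Real.rpow_le_rpow (hy n) (hyC n) (by positivity)
    _ = C ^ (1 / (n : ℝ)) * α := by
        rw [Real.mul_rpow hC (by positivity), ← Real.rpow_natCast, ← Real.rpow_mul hα,
          mul_one_div_cancel hn', Real.rpow_one]
    _ ≤ max C 1 * α := by
        gcongr
        exact (Real.rpow_le_rpow hC (le_max_left C 1) (by positivity)).trans
          (Real.rpow_le_self_of_one_le (le_max_right C 1)
            (div_le_one_of_le₀ (by exact_mod_cast hn) (by positivity)))

lemma eventually_le_pow_of_limsup_rpow_inv_lt {y : ℕ → ℝ} {s : ℝ} (hy : ∀ n, 0 ≤ y n)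
    (hbdd : IsBoundedUnder (· ≤ ·) atTop fun n => y n ^ (1 / (n : ℝ)))
    (hs : limsup (fun n => y n ^ (1 / (n : ℝ))) atTop < s) :
    ∀ᶠ n in atTop, y n ≤ s ^ n := by
  filter_upwards [eventually_lt_of_limsup_lt hs hbdd, eventually_ne_atTop 0] with n hn hn0
  rw [one_div] at hn
  calc y n = (y n ^ (n : ℝ)⁻¹) ^ n := (Real.rpow_inv_natCast_pow (hy n) hn0).symm
    _ ≤ s ^ n := pow_le_pow_left₀ (Real.rpow_nonneg (hy n) _) hn.le n

lemma mul_pow_mul_lt_one_of_lt_rpow {ρ σ s : ℝ} {m : ℕ} (hm : m ≠ 0) (hρ : 0 < ρ) (hσ : 0 ≤ σ)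
    (hs : 0 ≤ s) (h : σ = 0 ∨ s < σ ^ (-(1 : ℝ) / m) * ρ⁻¹) : (ρ * s) ^ m * σ < 1 := by
  rcases hσ.eq_or_lt with rfl | hσ
  · simp
  have hs' : ρ * s < σ ^ (-(1 : ℝ) / m) := by
    rcases h with h | h
    · exact absurd h hσ.ne'
    · rwa [lt_mul_inv_iff₀ hρ, mul_comm] at h
  have hpow : (σ ^ (-(1 : ℝ) / m)) ^ m = σ⁻¹ := by
    rw [← Real.rpow_natCast, ← Real.rpow_mul hσ.le, div_mul_cancel₀ _ (by exact_mod_cast hm),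
      Real.rpow_neg_one]
  calc (ρ * s) ^ m * σ < (σ ^ (-(1 : ℝ) / m)) ^ m * σ := by gcongr
    _ = 1 := by rw [hpow, inv_mul_cancel₀ hσ.ne']

lemma exists_gt_gt_mul_pow_mul_lt_one {ρ σ s : ℝ} {m : ℕ} (h : (ρ * s) ^ m * σ < 1) :
    ∃ t > s, ∃ σ' > σ, (ρ * t) ^ m * σ' < 1 := by
  have hnhds : ∀ᶠ q : ℝ × ℝ in 𝓝 (s, σ), (ρ * q.1) ^ m * q.2 < 1 :=
    (by fun_prop : Continuous fun q : ℝ × ℝ => (ρ * q.1) ^ m * q.2).continuousAt.eventually_lt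
      continuousAt_const h
  have hle : 𝓝[>] s ×ˢ 𝓝[>] σ ≤ 𝓝 (s, σ) := by
    rw [nhds_prod_eq]; exact prod_mono nhdsWithin_le_nhds nhdsWithin_le_nhds
  obtain ⟨⟨t, σ'⟩, hq, ht, hσ'⟩ :=
    ((hnhds.filter_mono hle).and (prod_mem_prod self_mem_nhdsWithin self_mem_nhdsWithin)).exists
  exact ⟨t, ht, σ', hσ', hq⟩

section MittagLeffler

variable {K : Type*} [NontriviallyNormedField K] {B : Type*} [NormedAddCommGroup B]
  [NormedSpace K B]

lemma natCast_succ_mul_inv_factorial_succ [CharZero K] (j : ℕ) :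
    ((j + 1 : ℕ) : K) * ((j + 1).factorial : K)⁻¹ = (j.factorial : K)⁻¹ := by
  rw [Nat.factorial_succ, Nat.cast_mul, mul_inv, ← mul_assoc,
    mul_inv_cancel₀ (Nat.cast_ne_zero.mpr j.succ_ne_zero), one_mul]

lemma natCast_succ_mul_pow_smul_inv_factorial_succ_smul [CharZero K] (j : ℕ) (z : K) (y : B) :
    (((j + 1 : ℕ) : K) * z ^ (j + 1 - 1)) • ((j + 1).factorial : K)⁻¹ • y
      = (j.factorial : K)⁻¹ • z ^ j • y := by
  rw [Nat.add_sub_cancel, smul_smul, smul_smul, mul_right_comm,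
    natCast_succ_mul_inv_factorial_succ]

noncomputable def mittagLefflerSeries (A : B →ₗ[K] B) (m k : ℕ) (v : B) (z : K) : B :=
  ∑' n : ℕ, ((m * n + k).factorial : K)⁻¹ • z ^ (m * n + k) • (⇑A)^[n] v

def mittagLefflerCoeff (A : B →ₗ[K] B) (m k : ℕ) (v : B) (n : ℕ) : B :=
  ((m * n + k).factorial : K)⁻¹ • (⇑A)^[n] v

lemma mittagLefflerSeries_eq_tsum (A : B →ₗ[K] B) (m k : ℕ) (v : B) :
    mittagLefflerSeries A m k v = fun z => ∑' n, z ^ (m * n + k) • mittagLefflerCoeff A m k v n :=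
  funext fun _ => tsum_congr fun _ => smul_comm _ _ _

variable {A : B →ₗ[K] B} {m : ℕ} {v : B} {t : ℝ}

lemma tendsto_pow_mul_norm_mittagLefflerCoeff {ρ s : ℝ}
    (hρ : ∀ j : ℕ, ‖(j.factorial : K)⁻¹‖ ≤ ρ ^ j) (hρ0 : 0 ≤ ρ) (ht : 0 ≤ t) (hs : 0 ≤ s)
    (hv : ∀ᶠ n in atTop, ‖(⇑A)^[n] v‖ ≤ s ^ n) (hq : (ρ * t) ^ m * s < 1) (k : ℕ) :
    Tendsto (fun n => t ^ (m * n + k) * ‖mittagLefflerCoeff A m k v n‖) atTop (𝓝 0) := by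
  have hgeom : Tendsto (fun n : ℕ => (ρ * t) ^ k * ((ρ * t) ^ m * s) ^ n) atTop (𝓝 0) := by
    simpa using (tendsto_pow_atTop_nhds_zero_of_lt_one (by positivity) hq).const_mul ((ρ * t) ^ k)
  refine squeeze_zero' (.of_forall fun n => by positivity) ?_ hgeom
  filter_upwards [hv] with n hn
  calc t ^ (m * n + k) * ‖mittagLefflerCoeff A m k v n‖
      ≤ t ^ (m * n + k) * (ρ ^ (m * n + k) * s ^ n) := by
        rw [mittagLefflerCoeff, norm_smul]; gcongr; exact hρ _
    _ = (ρ * t) ^ k * ((ρ * t) ^ m * s) ^ n := by ring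

variable [IsUltrametricDist K] [CompleteSpace B] [IsUltrametricDist B] {z : K}

theorem hasDerivAt_mittagLefflerSeries_succ [CharZero K] {k : ℕ}
    (hdecay : Tendsto (fun n => t ^ (m * n + (k + 1)) * ‖mittagLefflerCoeff A m (k + 1) v n‖)
      atTop (𝓝 0)) (hz : ‖z‖ < t) :
    HasDerivAt (mittagLefflerSeries A m (k + 1) v) (mittagLefflerSeries A m k v z) z := by
  rw [mittagLefflerSeries_eq_tsum]
  convert hasDerivAt_tsum_pow_smul _ _ hdecay hz using 1
  exact tsum_congr fun n => (natCast_succ_mul_pow_smul_inv_factorial_succ_smul (m * n + k) z _).symm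

theorem hasDerivAt_mittagLefflerSeries_zero [CharZero K]
    (hdecay : Tendsto (fun n => t ^ ((m + 1) * n + 0) * ‖mittagLefflerCoeff A (m + 1) 0 v n‖)
      atTop (𝓝 0)) (hz : ‖z‖ < t) :
    HasDerivAt (mittagLefflerSeries A (m + 1) 0 v) (mittagLefflerSeries A (m + 1) m (A v) z) z := by
  rw [mittagLefflerSeries_eq_tsum]
  convert hasDerivAt_tsum_pow_smul _ _ hdecay hz using 1
  symm
  rw [← Nat.succ_injective.tsum_eq]
  · refine tsum_congr fun n => ?_
    have hexp : (m + 1) * (n + 1) + 0 = (m + 1) * n + m + 1 := by ring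
    rw [Nat.succ_eq_add_one, mittagLefflerCoeff, hexp,
      natCast_succ_mul_pow_smul_inv_factorial_succ_smul, Function.iterate_succ_apply]
  · intro n hn
    refine ⟨n - 1, Nat.succ_pred_eq_of_ne_zero ?_⟩
    rintro rfl
    simp at hn

end MittagLeffler

theorem mittag_leffler_derivative_relations_general
    {p : ℕ} [Fact p.Prime]
    {K : Type*} [NontriviallyNormedField K]
    [IsUltrametricDist K] [Algebra ℚ_[p] K]
    (hK : ∀ q : ℚ_[p], ‖algebraMap ℚ_[p] K q‖ = ‖q‖)
    {B : Type*} [NormedAddCommGroup B] [NormedSpace K B] [CompleteSpace B]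
    [IsUltrametricDist B]
    (A : B →ₗ[K] B)
    (m : ℕ) (hm : 1 ≤ m)
    (x : B)
    (hxE : ∃ α > (0 : ℝ), ∃ C > (0 : ℝ), ∀ n : ℕ, ‖(⇑A)^[n] x‖ ≤ C * α ^ n)
    (σ : ℝ)
    (hσ : σ = Filter.limsup (fun n : ℕ => ‖(⇑A)^[n] x‖ ^ (1 / (n : ℝ))) atTop)
    (F : ℕ → B → K → B)
    (hF : ∀ (k : ℕ) (v : B) (z : K),
      F k v z = ∑' n : ℕ, ((m * n + k).factorial : K)⁻¹ • z ^ (m * n + k) • (⇑A)^[n] v) :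
    ∀ z : K, (σ = 0 ∨ ‖z‖ < σ ^ (-(1 : ℝ) / (m : ℝ)) * (p : ℝ) ^ (-(1 : ℝ) / ((p : ℝ) - 1))) →
      (∀ k : ℕ, 1 ≤ k → k ≤ m - 1 → HasDerivAt (F k x) (F (k - 1) x z) z) ∧
      HasDerivAt (F 0 x) (F (m - 1) (A x) z) z := by
  intro z hz
  have : CharZero K := charZero_of_injective_algebraMap (algebraMap ℚ_[p] K).injective
  obtain ⟨m, rfl⟩ : ∃ m', m = m' + 1 := ⟨m - 1, by omega⟩
  have hF' : ∀ k v, F k v = mittagLefflerSeries A (m + 1) k v := fun k v => funext (hF k v)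
  simp only [hF', Nat.add_sub_cancel]
  set ρ : ℝ := (p : ℝ) ^ (1 / ((p : ℝ) - 1)) with hρ
  have hρ0 : 0 < ρ := Real.rpow_pos_of_pos (by exact_mod_cast (Fact.out : p.Prime).pos) _
  have hfactorial : ∀ j : ℕ, ‖(j.factorial : K)⁻¹‖ ≤ ρ ^ j := fun j => by
    rw [← map_natCast (algebraMap ℚ_[p] K), ← map_inv₀, hK]
    exact Padic.norm_inv_factorial_le j
  obtain ⟨α, hα, C, hC, hgrowth⟩ := hxE
  have hbdd := isBoundedUnder_rpow_inv_of_le_mul_pow (fun n => norm_nonneg _) hC.le hα.le hgrowth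
  have hσ0 : 0 ≤ σ :=
    hσ ▸ le_limsup_of_frequently_le (.of_forall fun n => Real.rpow_nonneg (norm_nonneg _) _) hbdd
  have hdisk : (ρ * ‖z‖) ^ (m + 1) * σ < 1 := by
    refine mul_pow_mul_lt_one_of_lt_rpow m.succ_ne_zero hρ0 hσ0 (norm_nonneg z) ?_
    rwa [hρ, ← Real.rpow_neg (by positivity), ← neg_div]
  obtain ⟨t, hzt, σ', hσσ', hq⟩ := exists_gt_gt_mul_pow_mul_lt_one hdisk
  have hdecay := tendsto_pow_mul_norm_mittagLefflerCoeff hfactorial hρ0.le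
    ((norm_nonneg z).trans hzt.le) (hσ0.trans hσσ'.le)
    (eventually_le_pow_of_limsup_rpow_inv_lt (fun n => norm_nonneg _) hbdd (hσ ▸ hσσ')) hq
  refine ⟨fun k hk _ => ?_, hasDerivAt_mittagLefflerSeries_zero (hdecay 0) hzt⟩
  obtain ⟨k, rfl⟩ : ∃ k', k = k' + 1 := ⟨k - 1, by omega⟩
  simpa using hasDerivAt_mittagLefflerSeries_succ (hdecay (k + 1)) hzt

theorem mittag_leffler_derivative_relations
    {p : ℕ} [Fact p.Prime]
    {K : Type*} [NontriviallyNormedField K] [CompleteSpace K] [IsAlgClosed K]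
    [IsUltrametricDist K] [Algebra ℚ_[p] K]
    (hK : ∀ q : ℚ_[p], ‖algebraMap ℚ_[p] K q‖ = ‖q‖)
    {B : Type*} [NormedAddCommGroup B] [NormedSpace K B] [CompleteSpace B]
    [IsUltrametricDist B]
    (D : Submodule K B) (A : B →ₗ[K] B)
    (hA : IsClosed {q : B × B | q.1 ∈ D ∧ A q.1 = q.2})
    (m : ℕ) (hm : 1 ≤ m)
    (x : B)
    (hxdom : ∀ n : ℕ, (⇑A)^[n] x ∈ D)
    (hxE : ∃ α > (0 : ℝ), ∃ C > (0 : ℝ), ∀ n : ℕ, ‖(⇑A)^[n] x‖ ≤ C * α ^ n)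
    (σ : ℝ)
    (hσ : σ = Filter.limsup (fun n : ℕ => ‖(⇑A)^[n] x‖ ^ (1 / (n : ℝ))) atTop)
    (F : ℕ → B → K → B)
    (hF : ∀ (k : ℕ) (v : B) (z : K),
      F k v z = ∑' n : ℕ, ((m * n + k).factorial : K)⁻¹ • z ^ (m * n + k) • (⇑A)^[n] v) :
    ∀ z : K, (σ = 0 ∨ ‖z‖ < σ ^ (-(1 : ℝ) / (m : ℝ)) * (p : ℝ) ^ (-(1 : ℝ) / ((p : ℝ) - 1))) →
      (∀ k : ℕ, 1 ≤ k → k ≤ m - 1 → HasDerivAt (F k x) (F (k - 1) x z) z) ∧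
      HasDerivAt (F 0 x) (F (m - 1) (A x) z) z :=
  mittag_leffler_derivative_relations_general hK A m hm x hxE σ hσ F hF
end

section
/- Let ρ > 0, let a_β ∈ 𝒜_ρ for |β| ≤ n, and set M = max_β { ρ^{−|β|} ‖a_β‖_ρ } (assume M > 0). Then for any initial data φ_0,…,φ_{m−1} ∈ 𝒜_ρ, the Cauchy problem ∂^m u(t,x)/∂t^m = Σ_{|β|=0}^{n} a_β(x) D^β u(t, x), u^{(k)}(0,x) = φ_k(x) (k = 0,…,m−1) has a unique locally analytic 𝒜_ρ-valued solution u(t) = Σ_{j≥0} c_j t^j (c_j ∈ 𝒜_ρ), and the series converges for all t ∈ ℂ_[p] with |t|_p < p^{−1/(p−1)} · M^{−1/m}. -/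
open Filter Topology

/-!
STATEMENT 17 (the Cauchy problem for `∂ᵐu/∂tᵐ = Σ_{|β| ≤ n} a_β D^β u` in `𝒜_ρ`).
`ℂ_[p]` is axiomatized as a complete, algebraically closed, nonarchimedean nontrivially
normed field `K` with an isometric `ℚ_[p]`-algebra structure.  An element of `𝒜_ρ` is a
coefficient family `f : (Fin n → ℕ) → K` with `|f_α| ρ^{|α|} → 0` as `|α| → ∞` (the
`cofinite` filter), and `‖f‖_ρ = sup_α |f_α| ρ^{|α|}` is `ν f`.  A locally analytic
`𝒜_ρ`-valued solution `u(t) = Σ_j c_j t^j` is encoded by its coefficient sequence `c`;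
the equation `u⁽ᵐ⁾ = A u` for a power series reads termwise as
`((j+m)!/j!)·c_{j+m} = A c_j`, the initial conditions as `k!·c_k = φ_k`, and convergence
of the series at `t` as `‖c_j‖_ρ · |t|^j → 0` (in the ultrametric Banach space `𝒜_ρ`
this is equivalent to convergence).
-/

/-- `u(t) = Σ_j c_j t^j` is a locally analytic `𝒜_ρ`-valued solution of
`u⁽ᵐ⁾ = Aop u`, `u⁽ᵏ⁾(0) = φ k` (`k = 0, …, m-1`). -/
def IsPDECauchySolution {K : Type*} [NontriviallyNormedField K] {n : ℕ}
    (ρ : ℝ) (ν : ((Fin n → ℕ) → K) → ℝ)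
    (Aop : ((Fin n → ℕ) → K) → ((Fin n → ℕ) → K))
    (m : ℕ) (φ : ℕ → ((Fin n → ℕ) → K)) (c : ℕ → ((Fin n → ℕ) → K)) : Prop :=
  (∀ j : ℕ, Filter.Tendsto (fun α : Fin n → ℕ => ‖c j α‖ * ρ ^ (∑ i, α i))
    Filter.cofinite (nhds 0)) ∧
  (∃ r > (0 : ℝ), Filter.Tendsto (fun j : ℕ => ν (c j) * r ^ j) Filter.atTop (nhds 0)) ∧
  (∀ j : ℕ, (((j + m).factorial / j.factorial : ℕ) : K) • c (j + m) = Aop (c j)) ∧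
  (∀ k < m, (k.factorial : K) • c k = φ k)

/-!
The recursion `((j+m)!/j!) c_{j+m} = A c_j` with `k! c_k = φ_k` forces
`c_N = (N!)⁻¹ A^⌊N/m⌋ φ_{N mod m}`, which gives existence and uniqueness at once.
In the ultrametric space `𝒜_ρ` the Cauchy product satisfies `‖f g‖_ρ ≤ ‖f‖_ρ ‖g‖_ρ`, and
`D^β` (a shift with natural-number coefficients, which have norm `≤ 1`) satisfies
`‖D^β f‖_ρ ≤ ρ^{-|β|} ‖f‖_ρ`; hence `‖A‖ ≤ M` and
`‖c_N‖_ρ ≤ |N!|_p⁻¹ M^⌊N/m⌋ max_k ‖φ_k‖_ρ`. Legendre's formula `(p-1) v_p(N!) ≤ N` gives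
`|N!|_p⁻¹ ≤ p^{N/(p-1)}`, so `‖c_N‖_ρ |t|^N` decays geometrically as soon as
`|t| p^{1/(p-1)} M^{1/m} < 1`.
-/

namespace PDECauchy

section WeightedNorm

variable {K : Type*} [NormedField K] {n : ℕ} {ρ : ℝ}

def weightedCoeff (ρ : ℝ) (f : (Fin n → ℕ) → K) (α : Fin n → ℕ) : ℝ :=
  ‖f α‖ * ρ ^ ∑ i, α i

def MemA (ρ : ℝ) (f : (Fin n → ℕ) → K) : Prop :=
  Tendsto (weightedCoeff ρ f) cofinite (𝓝 0)

noncomputable def weightedNorm (ρ : ℝ) (f : (Fin n → ℕ) → K) : ℝ :=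
  ⨆ α, weightedCoeff ρ f α

theorem weightedCoeff_nonneg (hρ : 0 ≤ ρ) (f : (Fin n → ℕ) → K) (α : Fin n → ℕ) :
    0 ≤ weightedCoeff ρ f α := by
  unfold weightedCoeff; positivity

theorem weightedNorm_nonneg (hρ : 0 ≤ ρ) (f : (Fin n → ℕ) → K) : 0 ≤ weightedNorm ρ f :=
  Real.iSup_nonneg (weightedCoeff_nonneg hρ f)

theorem weightedNorm_le {f : (Fin n → ℕ) → K} {C : ℝ} (h : ∀ α, weightedCoeff ρ f α ≤ C) :
    weightedNorm ρ f ≤ C :=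
  ciSup_le h

theorem MemA.weightedCoeff_le {f : (Fin n → ℕ) → K} (hf : MemA ρ f) (α : Fin n → ℕ) :
    weightedCoeff ρ f α ≤ weightedNorm ρ f :=
  le_ciSup hf.bddAbove_range_of_cofinite α

theorem memA_iff_finite (hρ : 0 ≤ ρ) {f : (Fin n → ℕ) → K} :
    MemA ρ f ↔ ∀ ε > 0, {α | ε ≤ weightedCoeff ρ f α}.Finite := by
  simp only [MemA, tendsto_order, eventually_cofinite, not_lt]
  refine ⟨fun h => h.2, fun h => ⟨fun ε hε => ?_, h⟩⟩
  exact Set.finite_empty.subset fun α hα =>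
    (weightedCoeff_nonneg hρ f α).not_gt (lt_of_le_of_lt hα hε)

theorem weightedCoeff_smul (s : K) (f : (Fin n → ℕ) → K) (α : Fin n → ℕ) :
    weightedCoeff ρ (s • f) α = ‖s‖ * weightedCoeff ρ f α := by
  simp only [weightedCoeff, Pi.smul_apply, smul_eq_mul, norm_mul, mul_assoc]

theorem weightedNorm_smul (s : K) (f : (Fin n → ℕ) → K) :
    weightedNorm ρ (s • f) = ‖s‖ * weightedNorm ρ f := by
  simp only [weightedNorm, weightedCoeff_smul, Real.mul_iSup_of_nonneg (norm_nonneg s)]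

theorem MemA.smul {f : (Fin n → ℕ) → K} (hf : MemA ρ f) (s : K) : MemA ρ (s • f) := by
  have h : weightedCoeff ρ (s • f) = fun α => ‖s‖ * weightedCoeff ρ f α :=
    funext (weightedCoeff_smul s f)
  simpa [MemA, h] using hf.const_mul ‖s‖

theorem MemA.finset_sum (hρ : 0 ≤ ρ) {ι : Type*} {s : Finset ι} {F : ι → (Fin n → ℕ) → K}
    (hF : ∀ b ∈ s, MemA ρ (F b)) : MemA ρ (∑ b ∈ s, F b) := by
  refine squeeze_zero (weightedCoeff_nonneg hρ _) (fun α => ?_) (by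
    simpa using tendsto_finsetSum s hF)
  simp only [weightedCoeff, Finset.sum_apply, ← Finset.sum_mul]
  gcongr
  exact norm_sum_le _ _

theorem sum_add_tsub_of_le {i α : Fin n → ℕ} (hle : i ≤ α) :
    ∑ j, α j = ∑ j, i j + ∑ j, (α - i) j := by
  conv_lhs => rw [← add_tsub_cancel_of_le hle]
  exact Finset.sum_add_distrib

variable [IsUltrametricDist K]

theorem norm_finset_sum_mul_le {ι : Type*} {s : Finset ι} {x : ι → K} {w C : ℝ}
    (hw : 0 < w) (hC : 0 ≤ C) (h : ∀ b ∈ s, ‖x b‖ * w ≤ C) : ‖∑ b ∈ s, x b‖ * w ≤ C := by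
  rw [← le_div_iff₀ hw]
  exact IsUltrametricDist.norm_sum_le_of_forall_le_of_nonneg (div_nonneg hC hw.le)
    fun b hb => (le_div_iff₀ hw).2 (h b hb)

theorem weightedNorm_finset_sum_le (hρ : 0 < ρ) {ι : Type*} {s : Finset ι}
    {F : ι → (Fin n → ℕ) → K} {C : ℝ} (hC : 0 ≤ C) (hF : ∀ b ∈ s, MemA ρ (F b))
    (h : ∀ b ∈ s, weightedNorm ρ (F b) ≤ C) : weightedNorm ρ (∑ b ∈ s, F b) ≤ C :=
  weightedNorm_le fun α => by
    simpa only [weightedCoeff, Finset.sum_apply] using norm_finset_sum_mul_le (by positivity) hC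
      fun b hb => ((hF b hb).weightedCoeff_le α).trans (h b hb)

end WeightedNorm

section Operators

variable {R : Type*} [CommSemiring R] {n : ℕ}

def cauchyProduct (f g : (Fin n → ℕ) → R) (α : Fin n → ℕ) : R :=
  ∑ i ∈ Finset.Iic α, f i * g (α - i)

/-- `D^β` is `coeffShift (fun γ => ∏ j, (γ j + β j)! / (γ j)!) β`; the estimates only use that
natural-number coefficients have norm `≤ 1` in an ultrametric field. -/
def coeffShift (k : (Fin n → ℕ) → ℕ) (β : Fin n → ℕ) (f : (Fin n → ℕ) → R)
    (γ : Fin n → ℕ) : R :=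
  (k γ : R) * f (γ + β)

def diffOp (S : Finset (Fin n → ℕ)) (a : (Fin n → ℕ) → (Fin n → ℕ) → R)
    (k : (Fin n → ℕ) → (Fin n → ℕ) → ℕ) (f : (Fin n → ℕ) → R) : (Fin n → ℕ) → R :=
  ∑ β ∈ S, cauchyProduct (a β) (coeffShift (k β) β f)

theorem diffOp_smul (S : Finset (Fin n → ℕ)) (a : (Fin n → ℕ) → (Fin n → ℕ) → R)
    (k : (Fin n → ℕ) → (Fin n → ℕ) → ℕ) (s : R) (f : (Fin n → ℕ) → R) :
    diffOp S a k (s • f) = s • diffOp S a k f := by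
  simp only [diffOp, Finset.smul_sum]
  refine Finset.sum_congr rfl fun β _ => funext fun α => ?_
  simp only [cauchyProduct, coeffShift, Pi.smul_apply, smul_eq_mul, Finset.mul_sum]
  exact Finset.sum_congr rfl fun _ _ => by ring

end Operators

section Estimates

variable {K : Type*} [NormedField K] [IsUltrametricDist K] {n : ℕ} {ρ : ℝ}

theorem weightedCoeff_cauchyProduct_le (hρ : 0 < ρ) {f g : (Fin n → ℕ) → K}
    {α : Fin n → ℕ} {C : ℝ} (hC : 0 ≤ C)
    (h : ∀ i ≤ α, weightedCoeff ρ f i * weightedCoeff ρ g (α - i) ≤ C) :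
    weightedCoeff ρ (cauchyProduct f g) α ≤ C := by
  refine norm_finset_sum_mul_le (by positivity) hC fun i hi => ?_
  rw [Finset.mem_Iic] at hi
  calc ‖f i * g (α - i)‖ * ρ ^ ∑ j, α j
      = weightedCoeff ρ f i * weightedCoeff ρ g (α - i) := by
        rw [sum_add_tsub_of_le hi, pow_add, norm_mul, weightedCoeff, weightedCoeff]; ring
    _ ≤ C := h i hi

theorem weightedNorm_cauchyProduct_le (hρ : 0 < ρ) {f g : (Fin n → ℕ) → K} (hf : MemA ρ f)
    (hg : MemA ρ g) : weightedNorm ρ (cauchyProduct f g) ≤ weightedNorm ρ f * weightedNorm ρ g :=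
  weightedNorm_le fun _ =>
    weightedCoeff_cauchyProduct_le hρ
      (mul_nonneg (weightedNorm_nonneg hρ.le f) (weightedNorm_nonneg hρ.le g)) fun i _ =>
      mul_le_mul (hf.weightedCoeff_le i) (hg.weightedCoeff_le _)
        (weightedCoeff_nonneg hρ.le g _) (weightedNorm_nonneg hρ.le f)

/-- The `α`-th coefficient of `f g` is small unless `α = i + j` with `i`, `j` among the finitely
many indices where `f`, resp. `g`, has weighted coefficient `≥ δ`. -/
theorem MemA.cauchyProduct (hρ : 0 < ρ) {f g : (Fin n → ℕ) → K} (hf : MemA ρ f)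
    (hg : MemA ρ g) : MemA ρ (cauchyProduct f g) := by
  set B := weightedNorm ρ f + weightedNorm ρ g + 1
  have hfB : weightedNorm ρ f ≤ B := by linarith [weightedNorm_nonneg hρ.le g]
  have hgB : weightedNorm ρ g ≤ B := by linarith [weightedNorm_nonneg hρ.le f]
  have hB : 0 < B := by linarith [weightedNorm_nonneg hρ.le f, weightedNorm_nonneg hρ.le g]
  rw [memA_iff_finite hρ.le]
  intro ε hε
  have hδ : 0 < ε / (2 * B) := by positivity
  have hδB : ε / (2 * B) * B = ε / 2 := by field_simp
  refine ((memA_iff_finite hρ.le |>.1 hf _ hδ).image2 (· + ·)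
    (memA_iff_finite hρ.le |>.1 hg _ hδ)).subset fun α hα => ?_
  by_contra hα'
  suffices weightedCoeff ρ (PDECauchy.cauchyProduct f g) α ≤ ε / 2 by
    linarith [show ε ≤ weightedCoeff ρ (PDECauchy.cauchyProduct f g) α from hα]
  refine weightedCoeff_cauchyProduct_le hρ (by positivity) fun i hi => ?_
  by_cases hfi : weightedCoeff ρ f i < ε / (2 * B)
  · calc weightedCoeff ρ f i * weightedCoeff ρ g (α - i) ≤ ε / (2 * B) * B :=
          mul_le_mul hfi.le ((hg.weightedCoeff_le _).trans hgB)
            (weightedCoeff_nonneg hρ.le g _) hδ.le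
      _ = ε / 2 := hδB
  · have hgi : weightedCoeff ρ g (α - i) < ε / (2 * B) := lt_of_not_ge fun hgi =>
      hα' ⟨i, le_of_not_gt hfi, α - i, hgi, add_tsub_cancel_of_le hi⟩
    calc weightedCoeff ρ f i * weightedCoeff ρ g (α - i) ≤ B * (ε / (2 * B)) :=
          mul_le_mul ((hf.weightedCoeff_le _).trans hfB) hgi.le
            (weightedCoeff_nonneg hρ.le g _) hB.le
      _ = ε / 2 := by rw [mul_comm, hδB]

theorem weightedCoeff_coeffShift_le (hρ : 0 < ρ) (k : (Fin n → ℕ) → ℕ) (β : Fin n → ℕ)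
    (f : (Fin n → ℕ) → K) (γ : Fin n → ℕ) :
    weightedCoeff ρ (coeffShift k β f) γ
      ≤ ρ ^ (-(∑ j, β j : ℤ)) * weightedCoeff ρ f (γ + β) := by
  have hpow : ρ ^ ∑ j, γ j = ρ ^ (-(∑ j, β j : ℤ)) * ρ ^ ∑ j, (γ + β) j := by
    rw [← zpow_natCast, ← zpow_natCast, ← zpow_add₀ hρ.ne']
    push_cast [Pi.add_apply, Finset.sum_add_distrib]
    ring_nf
  calc weightedCoeff ρ (coeffShift k β f) γ
      = ‖(k γ : K)‖ * (ρ ^ (-(∑ j, β j : ℤ)) * weightedCoeff ρ f (γ + β)) := by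
        rw [weightedCoeff, weightedCoeff, coeffShift, norm_mul, hpow]; ring
    _ ≤ ρ ^ (-(∑ j, β j : ℤ)) * weightedCoeff ρ f (γ + β) :=
        mul_le_of_le_one_left (mul_nonneg (zpow_nonneg hρ.le _) (weightedCoeff_nonneg hρ.le f _))
          (IsUltrametricDist.norm_natCast_le_one K _)

theorem MemA.coeffShift (hρ : 0 < ρ) {f : (Fin n → ℕ) → K} (hf : MemA ρ f)
    (k : (Fin n → ℕ) → ℕ) (β : Fin n → ℕ) : MemA ρ (coeffShift k β f) := by
  refine squeeze_zero (weightedCoeff_nonneg hρ.le _) (weightedCoeff_coeffShift_le hρ k β f) ?_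
  simpa using (hf.comp (add_left_injective β).tendsto_cofinite).const_mul _

theorem weightedNorm_coeffShift_le (hρ : 0 < ρ) {f : (Fin n → ℕ) → K} (hf : MemA ρ f)
    (k : (Fin n → ℕ) → ℕ) (β : Fin n → ℕ) :
    weightedNorm ρ (coeffShift k β f) ≤ ρ ^ (-(∑ j, β j : ℤ)) * weightedNorm ρ f :=
  weightedNorm_le fun γ => (weightedCoeff_coeffShift_le hρ k β f γ).trans <|
    mul_le_mul_of_nonneg_left (hf.weightedCoeff_le _) (zpow_nonneg hρ.le _)

theorem MemA.diffOp (hρ : 0 < ρ) {S : Finset (Fin n → ℕ)} {a : (Fin n → ℕ) → (Fin n → ℕ) → K}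
    (ha : ∀ β ∈ S, MemA ρ (a β)) (k : (Fin n → ℕ) → (Fin n → ℕ) → ℕ) {f : (Fin n → ℕ) → K}
    (hf : MemA ρ f) : MemA ρ (diffOp S a k f) :=
  MemA.finset_sum hρ.le fun β hβ => (ha β hβ).cauchyProduct hρ (hf.coeffShift hρ _ _)

theorem weightedNorm_diffOp_le (hρ : 0 < ρ) {S : Finset (Fin n → ℕ)}
    {a : (Fin n → ℕ) → (Fin n → ℕ) → K} (ha : ∀ β ∈ S, MemA ρ (a β))
    (k : (Fin n → ℕ) → (Fin n → ℕ) → ℕ) {M : ℝ} (hM0 : 0 ≤ M)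
    (hM : ∀ β ∈ S, ρ ^ (-(∑ j, β j : ℤ)) * weightedNorm ρ (a β) ≤ M)
    {f : (Fin n → ℕ) → K} (hf : MemA ρ f) :
    weightedNorm ρ (diffOp S a k f) ≤ M * weightedNorm ρ f := by
  have hf0 := weightedNorm_nonneg hρ.le f
  refine weightedNorm_finset_sum_le hρ (mul_nonneg hM0 hf0)
    (fun β hβ => (ha β hβ).cauchyProduct hρ (hf.coeffShift hρ _ _)) fun β hβ => ?_
  calc weightedNorm ρ (cauchyProduct (a β) (coeffShift (k β) β f))
      ≤ weightedNorm ρ (a β) * weightedNorm ρ (coeffShift (k β) β f) :=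
        weightedNorm_cauchyProduct_le hρ (ha β hβ) (hf.coeffShift hρ _ _)
    _ ≤ weightedNorm ρ (a β) * (ρ ^ (-(∑ j, β j : ℤ)) * weightedNorm ρ f) :=
        mul_le_mul_of_nonneg_left (weightedNorm_coeffShift_le hρ hf _ _)
          (weightedNorm_nonneg hρ.le _)
    _ = ρ ^ (-(∑ j, β j : ℤ)) * weightedNorm ρ (a β) * weightedNorm ρ f := by ring
    _ ≤ M * weightedNorm ρ f := mul_le_mul_of_nonneg_right (hM β hβ) hf0

end Estimates

section Recursion

variable (K : Type*) {V : Type*} [Field K] [AddCommGroup V] [Module K V]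

def cauchySeries (A : V → V) (m : ℕ) (φ : ℕ → V) (N : ℕ) : V :=
  (N.factorial : K)⁻¹ • A^[N / m] (φ (N % m))

variable {K} [CharZero K]

theorem factorial_smul_cauchySeries {A : V → V} {m : ℕ} (φ : ℕ → V) {k : ℕ} (hk : k < m) :
    (k.factorial : K) • cauchySeries K A m φ k = φ k := by
  rw [cauchySeries, Nat.div_eq_of_lt hk, Nat.mod_eq_of_lt hk, Function.iterate_zero_apply,
    smul_inv_smul₀ (Nat.cast_ne_zero.2 k.factorial_ne_zero)]

theorem cauchySeries_recursion {A : V → V} (hA : ∀ (s : K) v, A (s • v) = s • A v) {m : ℕ}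
    (hm : 0 < m) (φ : ℕ → V) (j : ℕ) :
    (((j + m).factorial / j.factorial : ℕ) : K) • cauchySeries K A m φ (j + m)
      = A (cauchySeries K A m φ j) := by
  have hj : (j.factorial : K) ≠ 0 := Nat.cast_ne_zero.2 j.factorial_ne_zero
  have hjm : ((j + m).factorial : K) ≠ 0 := Nat.cast_ne_zero.2 (j + m).factorial_ne_zero
  have hscalar : (((j + m).factorial / j.factorial : ℕ) : K) * ((j + m).factorial : K)⁻¹
      = (j.factorial : K)⁻¹ := by
    rw [Nat.cast_div (Nat.factorial_dvd_factorial (Nat.le_add_right j m)) hj]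
    field_simp
  rw [cauchySeries, cauchySeries, smul_smul, hscalar, hA, Nat.add_div_right j hm,
    Nat.add_mod_right, Function.iterate_succ_apply']

theorem eq_of_cauchy_recursion {A : V → V} {m : ℕ} (hm : 0 < m) {φ : ℕ → V} {c c' : ℕ → V}
    (hc : ∀ j, (((j + m).factorial / j.factorial : ℕ) : K) • c (j + m) = A (c j))
    (hc' : ∀ j, (((j + m).factorial / j.factorial : ℕ) : K) • c' (j + m) = A (c' j))
    (hc₀ : ∀ k < m, (k.factorial : K) • c k = φ k)
    (hc₀' : ∀ k < m, (k.factorial : K) • c' k = φ k) :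
    c = c' := by
  funext N
  induction N using Nat.strong_induction_on with
  | _ N ih =>
    rcases lt_or_ge N m with hN | hN
    · exact smul_right_injective V (Nat.cast_ne_zero.2 N.factorial_ne_zero)
        ((hc₀ N hN).trans (hc₀' N hN).symm)
    · obtain ⟨j, rfl⟩ := Nat.exists_eq_add_of_le' hN
      have hquot : 0 < (j + m).factorial / j.factorial :=
        Nat.div_pos (Nat.factorial_le (Nat.le_add_right j m)) j.factorial_pos
      refine smul_right_injective V (r := (((j + m).factorial / j.factorial : ℕ) : K))
        (Nat.cast_ne_zero.2 hquot.ne') ?_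
      simp only [hc, hc', ih j (by omega)]

end Recursion

theorem iterate_le_pow_mul {α : Type*} {A : α → α} {s : Set α} {ν : α → ℝ} {M : ℝ}
    (hM : 0 ≤ M) (hs : Set.MapsTo A s s) (hA : ∀ f ∈ s, ν (A f) ≤ M * ν f) (q : ℕ)
    {f : α} (hf : f ∈ s) : ν (A^[q] f) ≤ M ^ q * ν f := by
  induction q with
  | zero => simp
  | succ q ih =>
    rw [Function.iterate_succ_apply', pow_succ', mul_assoc]
    exact (hA _ (hs.iterate q hf)).trans (mul_le_mul_of_nonneg_left ih hM)

theorem Padic.norm_factorial_inv_le (p : ℕ) [Fact p.Prime] (N : ℕ) :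
    ‖(N.factorial : ℚ_[p])‖⁻¹ ≤ ((p : ℝ) ^ (1 / ((p : ℝ) - 1))) ^ N := by
  have hp : (1 : ℝ) < p := mod_cast (Fact.out : p.Prime).one_lt
  have hlegendre : (p - 1) * padicValNat p N.factorial ≤ N := by
    rw [sub_one_mul_padicValNat_factorial]; omega
  rw [Padic.norm_eq_zpow_neg_valuation (mod_cast N.factorial_ne_zero), Padic.valuation_natCast,
    zpow_neg, inv_inv, zpow_natCast, ← Real.rpow_natCast, ← Real.rpow_natCast,
    ← Real.rpow_mul (by positivity)]
  refine Real.rpow_le_rpow_of_exponent_le hp.le ?_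
  rw [div_mul_eq_mul_div, one_mul, le_div_iff₀ (by linarith)]
  have hcast : ((p - 1 : ℕ) : ℝ) = (p : ℝ) - 1 := by
    rw [Nat.cast_sub (Fact.out : p.Prime).one_le, Nat.cast_one]
  calc (padicValNat p N.factorial : ℝ) * ((p : ℝ) - 1)
      = (((p - 1) * padicValNat p N.factorial : ℕ) : ℝ) := by push_cast [hcast]; ring
    _ ≤ N := mod_cast hlegendre

theorem pow_div_le_max_mul_pow {x : ℝ} (hx : 0 < x) {m : ℕ} (hm : 0 < m) (N : ℕ) :
    (x ^ m) ^ (N / m) ≤ max 1 (x⁻¹ ^ m) * x ^ N := by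
  have hsplit : (x ^ m) ^ (N / m) = x⁻¹ ^ (N % m) * x ^ N := by
    rw [← pow_mul, inv_pow, eq_inv_mul_iff_mul_eq₀ (by positivity), ← pow_add, Nat.mod_add_div]
  rw [hsplit]
  gcongr
  rcases le_total x⁻¹ 1 with h | h
  · exact le_max_of_le_left (pow_le_one₀ (by positivity) h)
  · exact le_max_of_le_right (pow_le_pow_right₀ h (Nat.mod_lt N hm).le)

theorem tendsto_mul_pow_of_le_rpow_mul_pow_div {b : ℕ → ℝ} {q e M P r : ℝ} {m : ℕ} (hm : 0 < m)
    (hq : 0 < q) (hM : 0 < M) (hr0 : 0 ≤ r) (hr : r < q ^ (-1 / e) * M ^ (-1 / (m : ℝ)))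
    (hb0 : ∀ N, 0 ≤ b N) (hb : ∀ N, b N ≤ (q ^ (1 / e)) ^ N * (M ^ (N / m) * P)) :
    Tendsto (fun N => b N * r ^ N) atTop (𝓝 0) := by
  set x := M ^ (1 / (m : ℝ))
  have hx : 0 < x := by positivity
  have hxm : x ^ m = M := by
    rw [← Real.rpow_natCast, ← Real.rpow_mul hM.le, one_div_mul_cancel (by positivity),
      Real.rpow_one]
  have hP : 0 ≤ P := by simpa using (hb0 0).trans (hb 0)
  set y := q ^ (1 / e)
  have hθ : y * x * r < 1 := by
    rwa [neg_div, Real.rpow_neg hq.le, neg_div, Real.rpow_neg hM.le, ← mul_inv, ← mul_one (_)⁻¹,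
      lt_inv_mul_iff₀ (by positivity)] at hr
  set C := max 1 (x⁻¹ ^ m)
  refine squeeze_zero (fun N => mul_nonneg (hb0 N) (pow_nonneg hr0 N)) (fun N => ?_) (by
    simpa using (tendsto_pow_atTop_nhds_zero_of_lt_one (by positivity) hθ).const_mul (C * P))
  calc b N * r ^ N ≤ y ^ N * (M ^ (N / m) * P) * r ^ N := by gcongr; exact hb N
    _ ≤ y ^ N * (C * x ^ N * P) * r ^ N := by
        gcongr; rw [← hxm]; exact pow_div_le_max_mul_pow hx hm N
    _ = C * P * (y * x * r) ^ N := by ring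

section Solution

variable {K : Type*} [NormedField K] {n : ℕ} {ρ : ℝ} {A : ((Fin n → ℕ) → K) → (Fin n → ℕ) → K}
  {m : ℕ} {φ : ℕ → (Fin n → ℕ) → K}

theorem memA_cauchySeries (hA : Set.MapsTo A {f | MemA ρ f} {f | MemA ρ f}) (hm : 0 < m)
    (hφ : ∀ k < m, MemA ρ (φ k)) (N : ℕ) : MemA ρ (cauchySeries K A m φ N) :=
  MemA.smul (hA.iterate _ (hφ _ (Nat.mod_lt N hm))) _

theorem exists_weightedNorm_cauchySeries_le (hρ : 0 ≤ ρ) {M : ℝ} (hM : 0 ≤ M)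
    (hA : Set.MapsTo A {f | MemA ρ f} {f | MemA ρ f})
    (hAM : ∀ f ∈ {f | MemA ρ f}, weightedNorm ρ (A f) ≤ M * weightedNorm ρ f) (hm : 0 < m)
    (hφ : ∀ k < m, MemA ρ (φ k)) :
    ∃ P, 0 ≤ P ∧ ∀ N, weightedNorm ρ (cauchySeries K A m φ N)
      ≤ ‖(N.factorial : K)‖⁻¹ * (M ^ (N / m) * P) := by
  obtain ⟨P, hP⟩ := ((Set.finite_Iio m).image fun k => weightedNorm ρ (φ k)).bddAbove
  refine ⟨P, (weightedNorm_nonneg hρ _).trans (hP ⟨0, hm, rfl⟩), fun N => ?_⟩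
  have hNm := Nat.mod_lt N hm
  rw [cauchySeries, weightedNorm_smul, norm_inv]
  gcongr
  exact (iterate_le_pow_mul hM hA hAM _ (hφ _ hNm)).trans (by gcongr; exact hP ⟨_, hNm, rfl⟩)

end Solution

section SolutionPredicate

variable {K : Type*} [NontriviallyNormedField K] [CharZero K] {n : ℕ} {ρ : ℝ}
  {ν : ((Fin n → ℕ) → K) → ℝ} {A : ((Fin n → ℕ) → K) → (Fin n → ℕ) → K} {m : ℕ}
  {φ : ℕ → (Fin n → ℕ) → K}

theorem isPDECauchySolution_cauchySeries (hA : ∀ (s : K) f, A (s • f) = s • A f)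
    (hAmaps : Set.MapsTo A {f | MemA ρ f} {f | MemA ρ f}) (hm : 0 < m)
    (hφ : ∀ k < m, MemA ρ (φ k))
    (hconv : ∃ r > 0, Tendsto (fun N => ν (cauchySeries K A m φ N) * r ^ N) atTop (𝓝 0)) :
    IsPDECauchySolution ρ ν A m φ (cauchySeries K A m φ) :=
  ⟨memA_cauchySeries hAmaps hm hφ, hconv, cauchySeries_recursion hA hm φ,
    fun _ hk => factorial_smul_cauchySeries φ hk⟩

theorem IsPDECauchySolution.eq_cauchySeries (hA : ∀ (s : K) f, A (s • f) = s • A f)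
    (hm : 0 < m) {c : ℕ → (Fin n → ℕ) → K} (hc : IsPDECauchySolution ρ ν A m φ c) :
    c = cauchySeries K A m φ :=
  eq_of_cauchy_recursion hm hc.2.2.1 (cauchySeries_recursion hA hm φ) hc.2.2.2
    fun _ hk => factorial_smul_cauchySeries φ hk

end SolutionPredicate

end PDECauchy

open PDECauchy in
theorem pde_cauchy_problem_wellposed_general
    {p : ℕ} [Fact p.Prime]
    {K : Type*} [NontriviallyNormedField K]
    [IsUltrametricDist K] [Algebra ℚ_[p] K]
    (hK : ∀ q : ℚ_[p], ‖algebraMap ℚ_[p] K q‖ = ‖q‖)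
    (n : ℕ) (ρ : ℝ) (hρ : 0 < ρ)
    (m : ℕ) (hm : 1 ≤ m)
    (ν : ((Fin n → ℕ) → K) → ℝ)
    (hν : ∀ f : (Fin n → ℕ) → K, ν f = ⨆ α : Fin n → ℕ, ‖f α‖ * ρ ^ (∑ i, α i))
    (mul : ((Fin n → ℕ) → K) → ((Fin n → ℕ) → K) → ((Fin n → ℕ) → K))
    (hmul : ∀ (f g : (Fin n → ℕ) → K) (α : Fin n → ℕ),
      mul f g α = ∑ i ∈ Finset.Iic α, f i * g (α - i))
    (Dop : (Fin n → ℕ) → ((Fin n → ℕ) → K) → ((Fin n → ℕ) → K))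
    (hDop : ∀ (β : Fin n → ℕ) (f : (Fin n → ℕ) → K) (γ : Fin n → ℕ),
      Dop β f γ = ((∏ j, ((γ j + β j).factorial / (γ j).factorial) : ℕ) : K) * f (γ + β))
    (S : Finset (Fin n → ℕ))
    (hSne : S.Nonempty)
    (a : (Fin n → ℕ) → ((Fin n → ℕ) → K))
    (ha : ∀ β ∈ S, Tendsto (fun α : Fin n → ℕ => ‖a β α‖ * ρ ^ (∑ i, α i)) cofinite (nhds 0))
    (Aop : ((Fin n → ℕ) → K) → ((Fin n → ℕ) → K))
    (hAop : ∀ f : (Fin n → ℕ) → K, Aop f = ∑ β ∈ S, mul (a β) (Dop β f))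
    (M : ℝ) (hM : M = S.sup' hSne fun β => ρ ^ (-(∑ j, β j : ℤ)) * ν (a β))
    (hMpos : 0 < M)
    (φ : ℕ → ((Fin n → ℕ) → K))
    (hφ : ∀ k < m, Tendsto (fun α : Fin n → ℕ => ‖φ k α‖ * ρ ^ (∑ i, α i)) cofinite (nhds 0)) :
    ∃ c : ℕ → ((Fin n → ℕ) → K),
      IsPDECauchySolution ρ ν Aop m φ c ∧
      (∀ t : K, ‖t‖ < (p : ℝ) ^ (-(1 : ℝ) / ((p : ℝ) - 1)) * M ^ (-(1 : ℝ) / (m : ℝ)) →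
        Tendsto (fun j : ℕ => ν (c j) * ‖t‖ ^ j) atTop (nhds 0)) ∧
      (∀ c' : ℕ → ((Fin n → ℕ) → K), IsPDECauchySolution ρ ν Aop m φ c' → c' = c) := by
  have : CharZero K := charZero_of_injective_algebraMap (algebraMap ℚ_[p] K).injective
  obtain rfl : ν = weightedNorm ρ := funext hν
  set k : (Fin n → ℕ) → (Fin n → ℕ) → ℕ := fun β γ =>
    ∏ j, (γ j + β j).factorial / (γ j).factorial
  obtain rfl : Aop = diffOp S a k := by
    funext f
    rw [hAop]
    refine Finset.sum_congr rfl fun β _ => funext fun α => ?_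
    simp only [hmul, hDop]
    rfl
  have hM' : ∀ β ∈ S, ρ ^ (-(∑ j, β j : ℤ)) * weightedNorm ρ (a β) ≤ M := fun β hβ =>
    hM ▸ Finset.le_sup' (fun β => ρ ^ (-(∑ j, β j : ℤ)) * weightedNorm ρ (a β)) hβ
  have hAmaps : Set.MapsTo (diffOp S a k) {f | MemA ρ f} {f | MemA ρ f} := fun f hf =>
    MemA.diffOp hρ ha k hf
  obtain ⟨P, hP0, hP⟩ := exists_weightedNorm_cauchySeries_le hρ.le hMpos.le hAmaps
    (fun f hf => weightedNorm_diffOp_le hρ ha k hMpos.le hM' hf) hm hφ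
  have hconv : ∀ r, 0 ≤ r → r < (p : ℝ) ^ (-(1 : ℝ) / ((p : ℝ) - 1)) * M ^ (-(1 : ℝ) / (m : ℝ)) →
      Tendsto (fun N => weightedNorm ρ (cauchySeries K (diffOp S a k) m φ N) * r ^ N)
        atTop (𝓝 0) := fun r hr0 hr =>
    tendsto_mul_pow_of_le_rpow_mul_pow_div hm (mod_cast (Fact.out : p.Prime).pos) hMpos hr0 hr
      (fun N => weightedNorm_nonneg hρ.le _) fun N => (hP N).trans <| by
        gcongr
        rw [← map_natCast (algebraMap ℚ_[p] K), hK]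
        exact Padic.norm_factorial_inv_le p N
  have hR : 0 < (p : ℝ) ^ (-(1 : ℝ) / ((p : ℝ) - 1)) * M ^ (-(1 : ℝ) / (m : ℝ)) :=
    mul_pos (Real.rpow_pos_of_pos (mod_cast (Fact.out : p.Prime).pos) _) (by positivity)
  refine ⟨_, isPDECauchySolution_cauchySeries (diffOp_smul S a k) hAmaps hm hφ
      ⟨_, half_pos hR, hconv _ (half_pos hR).le (half_lt_self hR)⟩,
    fun t ht => hconv _ (norm_nonneg t) ht,
    fun c' hc' => hc'.eq_cauchySeries (diffOp_smul S a k) hm⟩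

theorem pde_cauchy_problem_wellposed
    {p : ℕ} [Fact p.Prime]
    {K : Type*} [NontriviallyNormedField K] [CompleteSpace K] [IsAlgClosed K]
    [IsUltrametricDist K] [Algebra ℚ_[p] K]
    (hK : ∀ q : ℚ_[p], ‖algebraMap ℚ_[p] K q‖ = ‖q‖)
    (n : ℕ) (hn : 1 ≤ n) (ρ : ℝ) (hρ : 0 < ρ)
    (m : ℕ) (hm : 1 ≤ m)
    (ν : ((Fin n → ℕ) → K) → ℝ)
    (hν : ∀ f : (Fin n → ℕ) → K, ν f = ⨆ α : Fin n → ℕ, ‖f α‖ * ρ ^ (∑ i, α i))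
    (mul : ((Fin n → ℕ) → K) → ((Fin n → ℕ) → K) → ((Fin n → ℕ) → K))
    (hmul : ∀ (f g : (Fin n → ℕ) → K) (α : Fin n → ℕ),
      mul f g α = ∑ i ∈ Finset.Iic α, f i * g (α - i))
    (Dop : (Fin n → ℕ) → ((Fin n → ℕ) → K) → ((Fin n → ℕ) → K))
    (hDop : ∀ (β : Fin n → ℕ) (f : (Fin n → ℕ) → K) (γ : Fin n → ℕ),
      Dop β f γ = ((∏ j, ((γ j + β j).factorial / (γ j).factorial) : ℕ) : K) * f (γ + β))
    (S : Finset (Fin n → ℕ))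
    (hS : S = (Finset.Iic (fun _ => n : Fin n → ℕ)).filter (fun β => ∑ j, β j ≤ n))
    (hSne : S.Nonempty)
    (a : (Fin n → ℕ) → ((Fin n → ℕ) → K))
    (ha : ∀ β ∈ S, Tendsto (fun α : Fin n → ℕ => ‖a β α‖ * ρ ^ (∑ i, α i)) cofinite (nhds 0))
    (Aop : ((Fin n → ℕ) → K) → ((Fin n → ℕ) → K))
    (hAop : ∀ f : (Fin n → ℕ) → K, Aop f = ∑ β ∈ S, mul (a β) (Dop β f))
    (M : ℝ) (hM : M = S.sup' hSne fun β => ρ ^ (-(∑ j, β j : ℤ)) * ν (a β))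
    (hMpos : 0 < M)
    (φ : ℕ → ((Fin n → ℕ) → K))
    (hφ : ∀ k < m, Tendsto (fun α : Fin n → ℕ => ‖φ k α‖ * ρ ^ (∑ i, α i)) cofinite (nhds 0)) :
    ∃ c : ℕ → ((Fin n → ℕ) → K),
      IsPDECauchySolution ρ ν Aop m φ c ∧
      (∀ t : K, ‖t‖ < (p : ℝ) ^ (-(1 : ℝ) / ((p : ℝ) - 1)) * M ^ (-(1 : ℝ) / (m : ℝ)) →
        Tendsto (fun j : ℕ => ν (c j) * ‖t‖ ^ j) atTop (nhds 0)) ∧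
      (∀ c' : ℕ → ((Fin n → ℕ) → K), IsPDECauchySolution ρ ν Aop m φ c' → c' = c) :=
  pde_cauchy_problem_wellposed_general hK n ρ hρ m hm ν hν mul hmul Dop hDop S hSne a ha Aop hAop M
    hM hMpos φ hφ
end
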